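/- arXiv:2102.11769 — 8 statements merged into one kernel-verified Lean document; each statement's English description precedes it below -/
import Mathlib

section
/- Let Γ be a discrete subring of ℂ containing 1, let z ∈ ℂ' and let (a_n)_{n≥0} be a continued fraction expansion of z over Γ with Q-pair (p_n), (q_n). Then |q_n| → ∞ as n → ∞. -/
/-- The quotient field of a subring `Γ` of `ℂ`, as a subset of `ℂ`. -/
def quotField (Γ : Subring ℂ) : Set ℂ :=
  {x | ∃ p ∈ Γ, ∃ q ∈ Γ, q ≠ 0 ∧ x = p / q}

/-- `(a n)` is a continued fraction expansion of `z` over `Γ`, with iteration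
sequence `(zs n)`: `zs 0 = z`, `0 < |zs n - a n| < 1` and `zs (n+1) = (zs n - a n)⁻¹`. -/
def IsCFE (Γ : Subring ℂ) (z : ℂ) (a zs : ℕ → ℂ) : Prop :=
  (∀ n, a n ∈ Γ) ∧ zs 0 = z ∧
    (∀ n, 0 < ‖zs n - a n‖ ∧ ‖zs n - a n‖ < 1) ∧
    (∀ n, zs (n + 1) = (zs n - a n)⁻¹)

/-- The Q-pair of a sequence of partial quotients, with indices shifted by one:
`p (n+1)` is the paper's `p_n` and `q (n+1)` is the paper's `q_n`
(so `p 0 = p_{-1} = 1` and `q 0 = q_{-1} = 0`). -/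
def IsQPair (a p q : ℕ → ℂ) : Prop :=
  p 0 = 1 ∧ p 1 = a 0 ∧ (∀ n, p (n + 2) = a (n + 1) * p (n + 1) + p n) ∧
  q 0 = 0 ∧ q 1 = 1 ∧ (∀ n, q (n + 2) = a (n + 1) * q (n + 1) + q n)


/-!
With `θ n = q n * z - p n`, the recurrences give `θ (n + 1) = -(zs n - a n) * θ n` and `θ 0 = -1`,
so `‖θ n‖` is strictly decreasing and at most `1`. Hence the pairs `(q n, p n)` are pairwise distinct
points of `Γ × Γ` with `‖p n‖ ≤ ‖q n‖ * ‖z‖ + 1`; since `Γ` is discrete, only finitely many of them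
have `‖q n‖` below any given bound.
-/

open Filter Function

lemma AddSubgroup.tendsto_prod_cofinite_cocompact {G ι : Type*} [AddGroup G] [TopologicalSpace G]
    [IsTopologicalAddGroup G] [T2Space G] (H : AddSubgroup G) [DiscreteTopology H]
    {f g : ι → G} (hf : ∀ i, f i ∈ H) (hg : ∀ i, g i ∈ H) (hfg : Injective fun i ↦ (f i, g i)) :
    Tendsto (fun i ↦ (f i, g i)) cofinite (cocompact (G × G)) := by
  have hcoe : Tendsto ((↑) : H → G) cofinite (cocompact G) :=
    H.tendsto_coe_cofinite_of_discrete (isDiscrete_iff_discreteTopology.mpr ‹_›)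
  have hlift : Injective fun i ↦ ((⟨f i, hf i⟩ : H), (⟨g i, hg i⟩ : H)) := fun i j hij ↦
    hfg (by simpa using hij)
  have hprod := (hcoe.prodMap_coprod hcoe).comp
    (coprod_cofinite (α := H) (β := H) ▸ hlift.tendsto_cofinite)
  rwa [coprod_cocompact] at hprod

lemma IsQPair.mem_of_forall_mem {S : Subring ℂ} {a p q : ℕ → ℂ} (hpq : IsQPair a p q)
    (ha : ∀ n, a n ∈ S) (n : ℕ) : p n ∈ S ∧ q n ∈ S := by
  obtain ⟨hp0, hp1, hp, hq0, hq1, hq⟩ := hpq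
  induction n using Nat.twoStepInduction with
  | zero => simp [hp0, hq0, S.one_mem, S.zero_mem]
  | one => simp [hp1, hq1, ha 0, S.one_mem]
  | more n ihn ihn1 =>
    rw [hp, hq]
    exact ⟨add_mem (mul_mem (ha _) ihn1.1) ihn.1, add_mem (mul_mem (ha _) ihn1.2) ihn.2⟩

namespace IsCFE

variable {Γ : Subring ℂ} {z : ℂ} {a zs p q : ℕ → ℂ}

lemma sub_ne_zero (hcf : IsCFE Γ z a zs) (n : ℕ) : zs n - a n ≠ 0 :=
  norm_pos_iff.mp (hcf.2.2.1 n).1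

lemma error_succ (hcf : IsCFE Γ z a zs) (hpq : IsQPair a p q) (n : ℕ) :
    q (n + 1) * z - p (n + 1) = -(zs n - a n) * (q n * z - p n) := by
  have hne := hcf.sub_ne_zero
  obtain ⟨-, hz0, -, hzs⟩ := hcf
  obtain ⟨hp0, hp1, hp, hq0, hq1, hq⟩ := hpq
  induction n with
  | zero => simp [hp0, hp1, hq0, hq1, hz0]
  | succ n ih =>
    have hprev : q n * z - p n = -zs (n + 1) * (q (n + 1) * z - p (n + 1)) := by
      rw [ih, hzs, ← mul_assoc, neg_mul_neg, inv_mul_cancel₀ (hne n), one_mul]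
    calc q (n + 2) * z - p (n + 2)
        = a (n + 1) * (q (n + 1) * z - p (n + 1)) + (q n * z - p n) := by rw [hp, hq]; ring
      _ = -(zs (n + 1) - a (n + 1)) * (q (n + 1) * z - p (n + 1)) := by rw [hprev]; ring

lemma error_ne_zero (hcf : IsCFE Γ z a zs) (hpq : IsQPair a p q) (n : ℕ) :
    q n * z - p n ≠ 0 := by
  induction n with
  | zero => simp [hpq.1, hpq.2.2.2.1]
  | succ n ih =>
    rw [hcf.error_succ hpq]
    exact mul_ne_zero (neg_ne_zero.mpr (hcf.sub_ne_zero n)) ih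

lemma strictAnti_norm_error (hcf : IsCFE Γ z a zs) (hpq : IsQPair a p q) :
    StrictAnti fun n ↦ ‖q n * z - p n‖ := by
  refine strictAnti_nat_of_succ_lt fun n ↦ ?_
  rw [hcf.error_succ hpq, norm_mul, norm_neg]
  exact mul_lt_of_lt_one_left (norm_pos_iff.mpr (hcf.error_ne_zero hpq n)) (hcf.2.2.1 n).2

lemma norm_error_le_one (hcf : IsCFE Γ z a zs) (hpq : IsQPair a p q) (n : ℕ) :
    ‖q n * z - p n‖ ≤ 1 := by
  simpa [hpq.1, hpq.2.2.2.1] using (hcf.strictAnti_norm_error hpq).antitone n.zero_le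

lemma norm_numerator_le (hcf : IsCFE Γ z a zs) (hpq : IsQPair a p q) (n : ℕ) :
    ‖p n‖ ≤ ‖q n‖ * ‖z‖ + 1 := by
  calc ‖p n‖ = ‖q n * z - (q n * z - p n)‖ := by rw [sub_sub_cancel]
    _ ≤ ‖q n‖ * ‖z‖ + 1 := by
      grw [norm_sub_le, norm_mul, hcf.norm_error_le_one hpq]

lemma injective_denominator_numerator (hcf : IsCFE Γ z a zs) (hpq : IsQPair a p q) :
    Injective fun n ↦ (q n, p n) := fun m n hmn ↦ by
  simp only [Prod.mk.injEq] at hmn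
  exact (hcf.strictAnti_norm_error hpq).injective (by simp only [hmn])

theorem tendsto_norm_denominator [DiscreteTopology Γ] (hcf : IsCFE Γ z a zs)
    (hpq : IsQPair a p q) : Tendsto (fun n ↦ ‖q n‖) atTop atTop := by
  have hmem := hpq.mem_of_forall_mem hcf.1
  have hpair : Tendsto (fun n ↦ ‖(q n, p n)‖) atTop atTop := by
    rw [← Nat.cofinite_eq_atTop]
    exact tendsto_norm_cocompact_atTop.comp <| Γ.toAddSubgroup.tendsto_prod_cofinite_cocompact
      (fun n ↦ (hmem n).2) (fun n ↦ (hmem n).1) (hcf.injective_denominator_numerator hpq)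
  have hbound : ∀ n, ‖(q n, p n)‖ ≤ (1 + ‖z‖) * ‖q n‖ + 1 := fun n ↦ by
    rw [Prod.norm_mk, max_le_iff]
    constructor
    · nlinarith [norm_nonneg (q n), norm_nonneg z]
    · nlinarith [hcf.norm_numerator_le hpq n, norm_nonneg (q n)]
  refine tendsto_atTop_mono (fun n ↦ ?_) <|
    ((tendsto_atTop_add_const_right _ (-1) hpair).atTop_div_const (by positivity : 0 < 1 + ‖z‖))
  rw [div_le_iff₀ (by positivity)]
  linarith [hbound n]

end IsCFE

theorem stmt_1_general (Γ : Subring ℂ) (hdisc : DiscreteTopology Γ)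
    (z : ℂ)
    (a zs p q : ℕ → ℂ) (hcf : IsCFE Γ z a zs) (hpq : IsQPair a p q) :
    Filter.Tendsto (fun n => ‖q (n + 1)‖) Filter.atTop Filter.atTop :=
  (hcf.tendsto_norm_denominator hpq).comp (tendsto_add_atTop_nat 1)

/-- Proposition 2.2: the absolute values of the denominators tend to infinity. -/
theorem stmt_1 (Γ : Subring ℂ) (hdisc : DiscreteTopology Γ)
    (z : ℂ) (hz : z ∉ quotField Γ)
    (a zs p q : ℕ → ℂ) (hcf : IsCFE Γ z a zs) (hpq : IsQPair a p q) :
    Filter.Tendsto (fun n => ‖q (n + 1)‖) Filter.atTop Filter.atTop :=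
  stmt_1_general Γ hdisc z a zs p q hcf hpq
end

section
/- Let Γ be a discrete subring of ℂ containing 1, let z ∈ ℂ' and let (a_n)_{n≥0} be a continued fraction expansion of z over Γ with relative errors (δ_n). If N ⊆ ℕ is a neat subset for the expansion, then {δ_n : n ∈ N} is a bounded subset of ℂ. -/
/-- The sequence of relative errors `δ_n = q_n (q_n z - p_n)` (index shifted by one
in `p`, `q`, so `relErr z p q n` is the paper's `δ_n`). -/
def relErr (z : ℂ) (p q : ℕ → ℂ) (n : ℕ) : ℂ :=
  q (n + 1) * (q (n + 1) * z - p (n + 1))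

/-- `N ⊆ ℕ` is a neat subset for the expansion: `|q_{n-1}| ≤ |q_n|` for all `n ∈ N`
and `liminf_{n ∈ N} |z_{n+1}| > 1` (there is `α > 1` with `|z_{n+1}| ≥ α` for all but
finitely many `n ∈ N`). Indices of `q` are shifted by one, so `q n` is the paper's `q_{n-1}`. -/
def IsNeat (zs q : ℕ → ℂ) (N : Set ℕ) : Prop :=
  (∀ n ∈ N, ‖q n‖ ≤ ‖q (n + 1)‖) ∧
  ∃ α : ℝ, 1 < α ∧ {n | n ∈ N ∧ ‖zs (n + 1)‖ < α}.Finite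

/-!
Writing `D_n = z_{n+1} q_n + q_{n-1}`, the identity `z = (z_{n+1} p_n + p_{n-1}) / D_n` together
with `p_{n-1} q_n - p_n q_{n-1} = (-1)^n` gives `δ_n D_n = ± q_n`. On a neat set,
`|D_n| ≥ |z_{n+1}| |q_n| - |q_{n-1}| ≥ (α - 1) |q_n|` for all but finitely many `n`,
so `|δ_n| ≤ 1 / (α - 1)` there, and the finitely many remaining `δ_n` are bounded anyway.
-/

section

variable {Γ : Subring ℂ} {z : ℂ} {a zs p q : ℕ → ℂ}

theorem IsQPair.det_eq (hpq : IsQPair a p q) (n : ℕ) :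
    p n * q (n + 1) - p (n + 1) * q n = (-1) ^ n := by
  obtain ⟨hp0, hp1, hp, hq0, hq1, hq⟩ := hpq
  induction n with
  | zero => simp [hp0, hp1, hq0, hq1]
  | succ n ih =>
    rw [hp n, hq n]
    linear_combination -ih

theorem IsCFE.mul_sub_eq_one (hcf : IsCFE Γ z a zs) (n : ℕ) :
    zs (n + 1) * (zs n - a n) = 1 := by
  rw [hcf.2.2.2 n]
  exact inv_mul_cancel₀ (norm_pos_iff.mp (hcf.2.2.1 n).1)

theorem IsCFE.exact_value (hcf : IsCFE Γ z a zs) (hpq : IsQPair a p q) (n : ℕ) :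
    (zs (n + 1) * q (n + 1) + q n) * z = zs (n + 1) * p (n + 1) + p n := by
  obtain ⟨hp0, hp1, hp, hq0, hq1, hq⟩ := hpq
  induction n with
  | zero =>
    rw [hp0, hp1, hq0, hq1]
    linear_combination hcf.mul_sub_eq_one 0 - zs 1 * hcf.2.1
  | succ n ih =>
    rw [hp n, hq n]
    linear_combination zs (n + 2) * ih + (p (n + 1) - q (n + 1) * z) * hcf.mul_sub_eq_one (n + 1)

theorem IsCFE.relErr_mul (hcf : IsCFE Γ z a zs) (hpq : IsQPair a p q) (n : ℕ) :
    relErr z p q n * (zs (n + 1) * q (n + 1) + q n) = (-1) ^ n * q (n + 1) := by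
  unfold relErr
  linear_combination q (n + 1) * (q (n + 1) * hcf.exact_value hpq n + hpq.det_eq n)

theorem IsCFE.norm_relErr_le (hcf : IsCFE Γ z a zs) (hpq : IsQPair a p q) {n : ℕ} {α : ℝ}
    (hα : 1 < α) (hq : ‖q n‖ ≤ ‖q (n + 1)‖) (hzs : α ≤ ‖zs (n + 1)‖) :
    ‖relErr z p q n‖ ≤ (α - 1)⁻¹ := by
  set D := zs (n + 1) * q (n + 1) + q n
  have hD : (α - 1) * ‖q (n + 1)‖ ≤ ‖D‖ := by
    have := norm_sub_norm_le (zs (n + 1) * q (n + 1)) (-q n)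
    rw [sub_neg_eq_add, norm_neg, norm_mul] at this
    nlinarith [norm_nonneg (q (n + 1))]
  have hδD : ‖relErr z p q n‖ * ‖D‖ = ‖q (n + 1)‖ := by
    simpa using congrArg norm (hcf.relErr_mul hpq n)
  rcases (norm_nonneg (q (n + 1))).eq_or_lt with hq0 | hqpos
  · simp [relErr, norm_eq_zero.mp hq0.symm, inv_nonneg.mpr (sub_pos.mpr hα).le]
  · have : ‖relErr z p q n‖ * (α - 1) * ‖q (n + 1)‖ ≤ 1 * ‖q (n + 1)‖ :=
      calc ‖relErr z p q n‖ * (α - 1) * ‖q (n + 1)‖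
          = ‖relErr z p q n‖ * ((α - 1) * ‖q (n + 1)‖) := mul_assoc _ _ _
        _ ≤ ‖relErr z p q n‖ * ‖D‖ := by gcongr
        _ = 1 * ‖q (n + 1)‖ := by rw [hδD, one_mul]
    rw [← one_div, le_div_iff₀ (sub_pos.mpr hα)]
    exact le_of_mul_le_mul_right this hqpos

end

theorem stmt_3_general (Γ : Subring ℂ)
    (z : ℂ)
    (a zs p q : ℕ → ℂ) (hcf : IsCFE Γ z a zs) (hpq : IsQPair a p q)
    (N : Set ℕ) (hN : IsNeat zs q N) :
    ∃ M : ℝ, ∀ n ∈ N, ‖relErr z p q n‖ ≤ M := by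
  obtain ⟨hmono, α, hα, hfin⟩ := hN
  obtain ⟨C, hC⟩ := (hfin.image fun n => ‖relErr z p q n‖).bddAbove
  refine ⟨max C (α - 1)⁻¹, fun n hn => ?_⟩
  by_cases hzs : ‖zs (n + 1)‖ < α
  · exact le_max_of_le_left (hC ⟨n, ⟨hn, hzs⟩, rfl⟩)
  · exact le_max_of_le_right (hcf.norm_relErr_le hpq hα (hmono n hn) (not_lt.mp hzs))

/-- Proposition 2.6: on a neat subset the relative errors are bounded. -/
theorem stmt_3 (Γ : Subring ℂ) (hdisc : DiscreteTopology Γ)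
    (z : ℂ) (hz : z ∉ quotField Γ)
    (a zs p q : ℕ → ℂ) (hcf : IsCFE Γ z a zs) (hpq : IsQPair a p q)
    (N : Set ℕ) (hN : IsNeat zs q N) :
    ∃ M : ℝ, ∀ n ∈ N, ‖relErr z p q n‖ ≤ M :=
  stmt_3_general Γ z a zs p q hcf hpq N hN
end

section
/- Let σ : ℂ → ℂ be either the identity or complex conjugation, let X ∈ M(2,ℂ) be a σ-symmetric matrix with associated σ-form f, and let (ξ,η) ∈ ℂ² be a nontrivial zero of f. Let (a_n)_{n≥0} be a continued fraction expansion of ξ/η over Γ, let (g_n)_{n≥0} be the associated sequence of matrices, and let N ⊆ ℕ be an infinite neat subset for the expansion. Then {X_{g_n,σ} : n ∈ N} is a bounded subset of M(2,ℂ). Moreover, if X ∈ M(2, k^{−1}Γ) for some k ∈ ℕ (i.e. all entries of X lie in k^{−1}Γ), then {X_{g_n,σ} : n ∈ N} is a finite set. -/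
/-- The σ-form associated with a 2×2 matrix `X = [[A,B],[C,D]]`:
`f(ξ,η) = A ξ^σ ξ + B ξ^σ η + C η^σ ξ + D η^σ η`. -/
def sform (σ : ℂ → ℂ) (X : Matrix (Fin 2) (Fin 2) ℂ) (ξ η : ℂ) : ℂ :=
  σ ξ * (X 0 0 * ξ + X 0 1 * η) + σ η * (X 1 0 * ξ + X 1 1 * η)

/-- `X_{g,σ} = (gᵗ)^σ X g`. -/
noncomputable def matTransform (σ : ℂ → ℂ) (X g : Matrix (Fin 2) (Fin 2) ℂ) :
    Matrix (Fin 2) (Fin 2) ℂ :=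
  (g.transpose.map σ) * X * g

/-- The matrix `g_n = [[p_n, p_{n-1}],[q_n, q_{n-1}]]` associated with a continued
fraction expansion (indices of `p`, `q` shifted by one). -/
def cfMatrix (p q : ℕ → ℂ) (n : ℕ) : Matrix (Fin 2) (Fin 2) ℂ :=
  !![p (n + 1), p n; q (n + 1), q n]

/-!
Put `z = ξ / η`, `e_n = q_n z - p_n` and `U = !![z, -1; 1, 0]`. Then
`g_n = U * !![q_n, q_{n-1}; e_n, e_{n-1}]`, so `X_{g_n,σ}` is the transform of `Y = X_{U,σ}` by
that matrix, and `Y 0 0 = f(z, 1) = 0`. Hence every entry of `X_{g_n,σ}` is a combination of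
products `q e` and `e e`. From `e_{n-1} = -z_{n+1} e_n` and the determinant identity,
`e_n (q_n z_{n+1} + q_{n-1}) = ±1`, so when `|q_{n-1}| ≤ |q_n|` and `|z_{n+1}| ≥ α > 1` all these
products are at most `α / (α - 1)`; neatness leaves only finitely many other `n`.
If `k X` has entries in `Γ`, so has `k X_{g_n,σ}`: complex conjugation preserves `Γ`, because a
non-real element of a discrete subring satisfies an integral quadratic equation whose other root
is its conjugate. A bounded subset of the discrete `Γ` is finite.
-/

open Complex ComplexConjugate

namespace Subring

variable {Γ : Subring ℂ} [DiscreteTopology Γ]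

theorem isIntegral_of_discrete {γ : ℂ} (hγ : γ ∈ Γ) : IsIntegral ℤ γ := by
  have : DiscreteTopology Γ.toAddSubgroup.toIntSubmodule := ‹DiscreteTopology Γ›
  refine isIntegral_of_smul_mem_submodule Γ.toAddSubgroup.toIntSubmodule ?_
    (Module.Finite.iff_fg.mp inferInstance) γ fun x hx => Γ.mul_mem hγ hx
  exact (Submodule.ne_bot_iff _).mpr ⟨1, Γ.one_mem, one_ne_zero⟩

theorem not_linearIndependent_of_discrete {v : Fin 3 → ℂ} (hv : ∀ i, v i ∈ Γ) :
    ¬ LinearIndependent ℤ v := by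
  intro hli
  have hsub : (Submodule.span ℤ (Set.range v) : Set ℂ) ⊆ Γ := by
    rw [← Γ.coe_toAddSubgroup, ← AddSubgroup.coe_toIntSubmodule, SetLike.coe_subset_coe,
      Submodule.span_le]
    exact Set.range_subset_iff.mpr hv
  have hcard := linearIndependent_iff_card_eq_finrank_span.mp hli
  rw [← Real.finrank_eq_int_finrank_of_discrete (DiscreteTopology.of_subset ‹_› hsub)] at hcard
  have := (Submodule.span ℝ (Set.range v)).finrank_le
  rw [Complex.finrank_real_complex] at this
  simp only [Fintype.card_fin, Set.finrank] at hcard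
  omega

theorem exists_quadratic_of_discrete {γ : ℂ} (hγ : γ ∈ Γ) (him : γ.im ≠ 0) :
    ∃ b c d : ℤ, d ≠ 0 ∧ (b : ℂ) + c * γ + d * γ ^ 2 = 0 := by
  have hv : ∀ i, ![1, γ, γ ^ 2] i ∈ Γ := by
    intro i
    fin_cases i
    exacts [Γ.one_mem, hγ, Γ.pow_mem hγ 2]
  obtain ⟨g, hsum, i, hgi⟩ :=
    Fintype.not_linearIndependent_iff.mp (not_linearIndependent_of_discrete hv)
  have hrel : (g 0 : ℂ) + g 1 * γ + g 2 * γ ^ 2 = 0 := by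
    simpa [Fin.sum_univ_three, zsmul_eq_mul] using hsum
  refine ⟨g 0, g 1, g 2, fun hg2 => hgi ?_, hrel⟩
  rw [hg2, Int.cast_zero, zero_mul, add_zero] at hrel
  have hg1 : g 1 = 0 := by
    simpa [him] using congrArg Complex.im hrel
  rw [hg1, Int.cast_zero, zero_mul, add_zero, Int.cast_eq_zero] at hrel
  fin_cases i <;> assumption

theorem conj_mem_of_discrete {γ : ℂ} (hγ : γ ∈ Γ) : conj γ ∈ Γ := by
  by_cases him : γ.im = 0
  · rwa [conj_eq_iff_im.mpr him]
  obtain ⟨b, c, d, hd, hrel⟩ := exists_quadratic_of_discrete hγ him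
  have hrel' : (b : ℂ) + c * conj γ + d * conj γ ^ 2 = 0 := by
    simpa using congrArg conj hrel
  -- `γ` and `conj γ` are the two distinct roots of `b + c X + d X²`
  have hsum : γ + conj γ = ((-c / d : ℚ) : ℂ) := by
    have hne : γ - conj γ ≠ 0 := sub_ne_zero.mpr fun h => him (conj_eq_iff_im.mp h.symm)
    have hd' : (d : ℂ) ≠ 0 := Int.cast_ne_zero.mpr hd
    push_cast
    rw [eq_div_iff hd']
    refine mul_left_cancel₀ hne ?_
    linear_combination hrel - hrel'
  have hint : IsIntegral ℤ (-c / d : ℚ) := by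
    rw [← isIntegral_algebraMap_iff (algebraMap ℚ ℂ).injective]
    have hγ' := isIntegral_of_discrete hγ
    rw [eq_ratCast, ← hsum]
    exact hγ'.add (map_isIntegral_int (starRingEnd ℂ) hγ')
  obtain ⟨t, ht⟩ := IsIntegrallyClosed.isIntegral_iff.mp hint
  have : conj γ = t - γ := by
    rw [eq_sub_iff_add_eq', hsum, ← ht]
    simp
  rw [this]
  exact Γ.sub_mem (intCast_mem Γ t) hγ

end Subring

section SesquilinearForm

variable (φ : ℂ →+* ℂ)

theorem matTransform_mul (X U h : Matrix (Fin 2) (Fin 2) ℂ) :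
    matTransform φ X (U * h) = matTransform φ (matTransform φ X U) h := by
  simp only [matTransform, Matrix.transpose_mul, Matrix.map_mul, Matrix.mul_assoc]

theorem matTransform_smul (c : ℂ) (X g : Matrix (Fin 2) (Fin 2) ℂ) :
    matTransform φ (c • X) g = c • matTransform φ X g := by
  simp only [matTransform, Matrix.mul_smul, Matrix.smul_mul]

theorem matTransform_apply_zero_zero (X : Matrix (Fin 2) (Fin 2) ℂ) (z : ℂ) :
    matTransform φ X !![z, -1; 1, 0] 0 0 = sform φ X z 1 := by
  simp only [matTransform, Matrix.mul_apply, Matrix.map_apply, Matrix.transpose_apply,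
    Matrix.of_apply, Matrix.cons_val', Matrix.cons_val_zero, Matrix.cons_val_fin_one,
    Fin.sum_univ_two, Matrix.cons_val_one, map_one, one_mul, mul_one, sform]
  ring

theorem sform_mul_mul (X : Matrix (Fin 2) (Fin 2) ℂ) (c ξ η : ℂ) :
    sform φ X (c * ξ) (c * η) = φ c * c * sform φ X ξ η := by
  simp only [sform, map_mul]
  ring

theorem sform_div_one_eq_zero {X : Matrix (Fin 2) (Fin 2) ℂ} {ξ η : ℂ} (hη : η ≠ 0)
    (h : sform φ X ξ η = 0) : sform φ X (ξ / η) 1 = 0 := by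
  rw [div_eq_inv_mul, ← inv_mul_cancel₀ hη, sform_mul_mul, h, mul_zero]

theorem norm_matTransform_apply_le (hφ : ∀ x, ‖φ x‖ = ‖x‖) {Y : Matrix (Fin 2) (Fin 2) ℂ}
    (hY : Y 0 0 = 0) (h : Matrix (Fin 2) (Fin 2) ℂ) (i j : Fin 2) :
    ‖matTransform φ Y h i j‖ ≤
      ‖Y 0 1‖ * ‖h 0 i * h 1 j‖ + ‖Y 1 0‖ * ‖h 0 j * h 1 i‖ + ‖Y 1 1‖ * ‖h 1 i * h 1 j‖ := by
  have hexp : matTransform φ Y h i j =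
      φ (h 0 i) * Y 0 1 * h 1 j + φ (h 1 i) * Y 1 0 * h 0 j + φ (h 1 i) * Y 1 1 * h 1 j := by
    simp only [matTransform, Matrix.mul_apply, Matrix.map_apply, Matrix.transpose_apply,
      Fin.sum_univ_two, hY, mul_zero, zero_add]
    ring
  rw [hexp]
  refine (norm_add₃_le ..).trans_eq ?_
  simp only [norm_mul, hφ]
  ring

theorem matTransform_apply_mem {Γ : Subring ℂ} (hφΓ : ∀ x ∈ Γ, φ x ∈ Γ)
    {X g : Matrix (Fin 2) (Fin 2) ℂ} (hX : ∀ i j, X i j ∈ Γ) (hg : ∀ i j, g i j ∈ Γ)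
    (i j : Fin 2) : matTransform φ X g i j ∈ Γ := by
  simp only [matTransform, Matrix.mul_apply, Matrix.map_apply, Matrix.transpose_apply]
  exact Γ.sum_mem fun l _ => Γ.mul_mem
    (Γ.sum_mem fun k _ => Γ.mul_mem (hφΓ _ (hg k i)) (hX k l)) (hg l j)

end SesquilinearForm

theorem Matrix.exists_norm_apply_le_of_finite_exceptions {ι m n E : Type*} [Fintype m]
    [Fintype n] [SeminormedAddCommGroup E] {T : ι → Matrix m n E} {N B : Set ι}
    (hB : B.Finite) {M₀ : ℝ} (h : ∀ x ∈ N, x ∉ B → ∀ i j, ‖T x i j‖ ≤ M₀) :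
    ∃ M, ∀ x ∈ N, ∀ i j, ‖T x i j‖ ≤ M := by
  let _ := Matrix.seminormedAddCommGroup (m := m) (n := n) (α := E)
  obtain ⟨M₁, hM₁⟩ := (hB.image fun x => ‖T x‖).bddAbove
  refine ⟨max M₀ M₁, fun x hx i j => ?_⟩
  by_cases hxB : x ∈ B
  · exact (Matrix.norm_entry_le_entrywise_sup_norm _).trans
      ((hM₁ (Set.mem_image_of_mem _ hxB)).trans (le_max_right _ _))
  · exact (h x hx hxB i j).trans (le_max_left _ _)

theorem Subring.finite_setOf_matrix_of_discrete {m n : Type*} [Fintype m] [Fintype n]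
    {Γ : Subring ℂ} [DiscreteTopology Γ] {k : ℂ} (hk : k ≠ 0) (M : ℝ) :
    {Y : Matrix m n ℂ | ∀ i j, k * Y i j ∈ Γ ∧ ‖Y i j‖ ≤ M}.Finite := by
  have : DiscreteTopology Γ.toAddSubgroup := ‹DiscreteTopology Γ›
  have hF : ((fun y => y / k) '' (Metric.closedBall 0 (‖k‖ * M) ∩ Γ)).Finite :=
    (Metric.finite_isBounded_inter_isClosed DiscreteTopology.isDiscrete
      Metric.isBounded_closedBall
      (AddSubgroup.isClosed_of_discrete (H := Γ.toAddSubgroup))).image _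
  refine (Set.Finite.pi' fun _ => Set.Finite.pi' fun _ => hF).subset fun Y hY i j => ?_
  refine ⟨k * Y i j, ⟨?_, (hY i j).1⟩, mul_div_cancel_left₀ _ hk⟩
  rw [Metric.mem_closedBall, dist_zero_right, norm_mul]
  exact mul_le_mul_of_nonneg_left (hY i j).2 (norm_nonneg k)

/-- `e n = q n * z - p n`; with the index shift of `IsQPair`, this is the paper's
`q_{n-1} z - p_{n-1}`. -/
def cfError (z : ℂ) (p q : ℕ → ℂ) (n : ℕ) : ℂ := q n * z - p n

section ContinuedFraction

variable {Γ : Subring ℂ} {z : ℂ} {a zs p q : ℕ → ℂ}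

theorem IsQPair.mem (ha : ∀ n, a n ∈ Γ) (hpq : IsQPair a p q) (n : ℕ) : p n ∈ Γ ∧ q n ∈ Γ := by
  obtain ⟨hp0, hp1, hp, hq0, hq1, hq⟩ := hpq
  induction n using Nat.twoStepInduction with
  | zero => exact ⟨hp0 ▸ Γ.one_mem, hq0 ▸ Γ.zero_mem⟩
  | one => exact ⟨hp1 ▸ ha 0, hq1 ▸ Γ.one_mem⟩
  | more n ih₀ ih₁ =>
    rw [hp, hq]
    exact ⟨Γ.add_mem (Γ.mul_mem (ha _) ih₁.1) ih₀.1, Γ.add_mem (Γ.mul_mem (ha _) ih₁.2) ih₀.2⟩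

theorem IsQPair.det (hpq : IsQPair a p q) (n : ℕ) :
    p (n + 1) * q n - p n * q (n + 1) = -(-1) ^ n := by
  obtain ⟨hp0, hp1, hp, hq0, hq1, hq⟩ := hpq
  induction n with
  | zero => simp [hp0, hp1, hq0, hq1]
  | succ n ih =>
    rw [hp, hq, pow_succ]
    linear_combination -ih

theorem IsCFE.one_lt_norm (hcf : IsCFE Γ z a zs) (n : ℕ) : 1 < ‖zs (n + 1)‖ := by
  obtain ⟨hpos, hlt⟩ := hcf.2.2.1 n
  rw [hcf.2.2.2 n, norm_inv]
  exact one_lt_inv_iff₀.mpr ⟨hpos, hlt⟩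

theorem IsCFE.cfError_eq (hcf : IsCFE Γ z a zs) (hpq : IsQPair a p q) (n : ℕ) :
    cfError z p q n = -zs (n + 1) * cfError z p q (n + 1) := by
  obtain ⟨-, hz, hnorm, hzs⟩ := hcf
  obtain ⟨hp0, hp1, hp, hq0, hq1, hq⟩ := hpq
  have hne (n : ℕ) : zs n - a n ≠ 0 := norm_pos_iff.mp (hnorm n).1
  induction n with
  | zero =>
    simp only [cfError, hp0, hp1, hq0, hq1, hzs, ← hz]
    field_simp [hne 0]
    ring
  | succ n ih =>
    have hrec : cfError z p q (n + 2) = a (n + 1) * cfError z p q (n + 1) + cfError z p q n := by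
      simp only [cfError, hp, hq]
      ring
    rw [hrec, ih, hzs (n + 1)]
    field_simp [hne (n + 1)]
    ring

theorem IsCFE.norm_cfError_le_one (hcf : IsCFE Γ z a zs) (hpq : IsQPair a p q) (n : ℕ) :
    ‖cfError z p q n‖ ≤ 1 := by
  induction n with
  | zero => simp [cfError, hpq.1, hpq.2.2.2.1]
  | succ n ih =>
    rw [hcf.cfError_eq hpq n, norm_mul, norm_neg] at ih
    nlinarith [hcf.one_lt_norm n, norm_nonneg (cfError z p q (n + 1))]

theorem IsQPair.cfError_mul_sub (hpq : IsQPair a p q) (n : ℕ) :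
    cfError z p q n * q (n + 1) - cfError z p q (n + 1) * q n = -(-1) ^ n := by
  unfold cfError
  linear_combination hpq.det n

theorem IsCFE.norm_mul_cfError_le (hcf : IsCFE Γ z a zs) (hpq : IsQPair a p q) {n : ℕ} {α : ℝ}
    (hα : 1 < α) (hzs : α ≤ ‖zs (n + 1)‖) (hq : ‖q n‖ ≤ ‖q (n + 1)‖) :
    ‖q (n + 1) * cfError z p q (n + 1)‖ ≤ 1 / (α - 1) ∧
      ‖q (n + 1) * cfError z p q n‖ ≤ α / (α - 1) := by
  set e := cfError z p q
  have hcross := hpq.cfError_mul_sub (z := z) n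
  have hunit : ‖e (n + 1)‖ * ‖q (n + 1) * zs (n + 1) + q n‖ = 1 := by
    rw [← norm_mul]
    have : e (n + 1) * (q (n + 1) * zs (n + 1) + q n) = (-1) ^ n := by
      rw [hcf.cfError_eq hpq n] at hcross
      linear_combination -hcross
    simp [this]
  have hlower : ‖q (n + 1)‖ * (α - 1) ≤ ‖q (n + 1) * zs (n + 1) + q n‖ := by
    have := norm_sub_norm_le (q (n + 1) * zs (n + 1)) (-q n)
    rw [norm_mul, norm_neg, sub_neg_eq_add] at this
    nlinarith [norm_nonneg (q (n + 1))]
  have hα' : 0 < α - 1 := sub_pos.mpr hα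
  have h₁ : ‖q (n + 1) * e (n + 1)‖ ≤ 1 / (α - 1) := by
    rw [le_div_iff₀ hα', norm_mul]
    nlinarith [norm_nonneg (e (n + 1))]
  refine ⟨h₁, ?_⟩
  calc ‖q (n + 1) * e n‖ = ‖q n * e (n + 1) + -(-1) ^ n‖ := by
        congr 1; linear_combination hcross
    _ ≤ ‖q (n + 1) * e (n + 1)‖ + 1 := by
        refine (norm_add_le _ _).trans ?_
        rw [norm_neg, norm_pow, norm_neg, norm_one, one_pow, norm_mul, norm_mul]
        gcongr
    _ ≤ α / (α - 1) := by
        rw [show α / (α - 1) = 1 / (α - 1) + 1 by field_simp; ring]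
        linarith

variable (φ : ℂ →+* ℂ)

theorem cfMatrix_eq_mul (n : ℕ) :
    cfMatrix p q n =
      !![z, -1; 1, 0] * !![q (n + 1), q n; cfError z p q (n + 1), cfError z p q n] := by
  ext i j
  fin_cases i <;> fin_cases j <;> simp [cfMatrix, cfError, Matrix.mul_apply] <;> ring

theorem IsCFE.norm_matTransform_cfMatrix_le (hcf : IsCFE Γ z a zs) (hpq : IsQPair a p q)
    (hφ : ∀ x, ‖φ x‖ = ‖x‖) {X : Matrix (Fin 2) (Fin 2) ℂ} (hX : sform φ X z 1 = 0)
    {n : ℕ} {α : ℝ} (hα : 1 < α) (hzs : α ≤ ‖zs (n + 1)‖) (hq : ‖q n‖ ≤ ‖q (n + 1)‖)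
    (i j : Fin 2) :
    ‖matTransform φ X (cfMatrix p q n) i j‖ ≤
      ‖matTransform φ X !![z, -1; 1, 0] 0 1‖ * (α / (α - 1)) +
        ‖matTransform φ X !![z, -1; 1, 0] 1 0‖ * (α / (α - 1)) +
        ‖matTransform φ X !![z, -1; 1, 0] 1 1‖ := by
  set h : Matrix (Fin 2) (Fin 2) ℂ :=
    !![q (n + 1), q n; cfError z p q (n + 1), cfError z p q n]
  have hq' (i : Fin 2) : ‖h 0 i‖ ≤ ‖q (n + 1)‖ := by
    fin_cases i
    exacts [le_rfl, hq]
  have hqe (j : Fin 2) : ‖q (n + 1) * h 1 j‖ ≤ α / (α - 1) := by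
    obtain ⟨h₁, h₂⟩ := hcf.norm_mul_cfError_le hpq hα hzs hq
    fin_cases j
    exacts [h₁.trans (div_le_div_of_nonneg_right hα.le (sub_pos.mpr hα).le), h₂]
  have hprod (i j : Fin 2) : ‖h 0 i * h 1 j‖ ≤ α / (α - 1) := by
    rw [norm_mul]
    exact (mul_le_mul_of_nonneg_right (hq' i) (norm_nonneg _)).trans
      ((norm_mul ..).symm.trans_le (hqe j))
  have he (i : Fin 2) : ‖h 1 i‖ ≤ 1 := by
    fin_cases i <;> exact hcf.norm_cfError_le_one hpq _
  rw [cfMatrix_eq_mul, matTransform_mul]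
  refine (norm_matTransform_apply_le φ hφ (by rwa [matTransform_apply_zero_zero]) h i j).trans ?_
  have hee : ‖h 1 i * h 1 j‖ ≤ 1 := by
    rw [norm_mul]
    exact mul_le_one₀ (he i) (norm_nonneg _) (he j)
  gcongr
  · exact hprod i j
  · exact hprod j i
  · exact mul_le_of_le_one_right (norm_nonneg _) hee

theorem IsCFE.exists_bound_matTransform_cfMatrix (hcf : IsCFE Γ z a zs) (hpq : IsQPair a p q)
    (hφ : ∀ x, ‖φ x‖ = ‖x‖) {X : Matrix (Fin 2) (Fin 2) ℂ} (hX : sform φ X z 1 = 0)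
    {N : Set ℕ} (hneat : IsNeat zs q N) :
    ∃ M : ℝ, ∀ n ∈ N, ∀ i j : Fin 2, ‖matTransform φ X (cfMatrix p q n) i j‖ ≤ M := by
  obtain ⟨hq, α, hα, hfin⟩ := hneat
  exact Matrix.exists_norm_apply_le_of_finite_exceptions hfin fun n hn hnα =>
    hcf.norm_matTransform_cfMatrix_le φ hpq hφ hX hα (not_lt.mp fun h => hnα ⟨hn, h⟩) (hq n hn)

theorem IsQPair.finite_matTransform_cfMatrix [DiscreteTopology Γ] (ha : ∀ n, a n ∈ Γ)
    (hpq : IsQPair a p q) (hφΓ : ∀ x ∈ Γ, φ x ∈ Γ) {X : Matrix (Fin 2) (Fin 2) ℂ} {k : ℕ}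
    (hk : 0 < k) (hXk : ∀ i j : Fin 2, ∃ γ ∈ Γ, X i j = γ / (k : ℂ)) {N : Set ℕ} {M : ℝ}
    (hM : ∀ n ∈ N, ∀ i j : Fin 2, ‖matTransform φ X (cfMatrix p q n) i j‖ ≤ M) :
    {Y : Matrix (Fin 2) (Fin 2) ℂ | ∃ n ∈ N, Y = matTransform φ X (cfMatrix p q n)}.Finite := by
  have hk' : (k : ℂ) ≠ 0 := Nat.cast_ne_zero.mpr hk.ne'
  have hkX (i j : Fin 2) : ((k : ℂ) • X) i j ∈ Γ := by
    obtain ⟨γ, hγ, hX⟩ := hXk i j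
    rwa [Matrix.smul_apply, hX, smul_eq_mul, mul_div_cancel₀ _ hk']
  have hg (n : ℕ) (i j : Fin 2) : cfMatrix p q n i j ∈ Γ := by
    fin_cases i <;> fin_cases j
    exacts [(hpq.mem ha _).1, (hpq.mem ha _).1, (hpq.mem ha _).2, (hpq.mem ha _).2]
  refine (Subring.finite_setOf_matrix_of_discrete (Γ := Γ) hk' M).subset ?_
  rintro _ ⟨n, hn, rfl⟩ i j
  refine ⟨?_, hM n hn i j⟩
  rw [← smul_eq_mul, ← Matrix.smul_apply, ← matTransform_smul]
  exact matTransform_apply_mem φ hφΓ hkX (hg n) i j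

end ContinuedFraction

theorem stmt_5_general (Γ : Subring ℂ) (hdisc : DiscreteTopology Γ)
    (σ : ℂ → ℂ) (hσ : σ = id ∨ σ = fun x => (starRingEnd ℂ) x)
    (X : Matrix (Fin 2) (Fin 2) ℂ)
    (ξ η : ℂ) (hη : η ≠ 0)
    (hzero : sform σ X ξ η = 0)
    (a zs p q : ℕ → ℂ) (hcf : IsCFE Γ (ξ / η) a zs) (hpq : IsQPair a p q)
    (N : Set ℕ) (hneat : IsNeat zs q N) :
    (∃ M : ℝ, ∀ n ∈ N, ∀ i j : Fin 2,
        ‖matTransform σ X (cfMatrix p q n) i j‖ ≤ M)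
    ∧ (∀ k : ℕ, 0 < k →
        (∀ i j : Fin 2, ∃ γ ∈ Γ, X i j = γ / (k : ℂ)) →
        {Y : Matrix (Fin 2) (Fin 2) ℂ |
            ∃ n ∈ N, Y = matTransform σ X (cfMatrix p q n)}.Finite) := by
  obtain ⟨φ, rfl, hφ, hφΓ⟩ :
      ∃ φ : ℂ →+* ℂ, ⇑φ = σ ∧ (∀ x, ‖φ x‖ = ‖x‖) ∧ ∀ x ∈ Γ, φ x ∈ Γ := by
    rcases hσ with rfl | rfl
    · exact ⟨RingHom.id ℂ, rfl, fun _ => rfl, fun _ hx => hx⟩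
    · exact ⟨starRingEnd ℂ, rfl, Complex.norm_conj, fun _ => Subring.conj_mem_of_discrete⟩
  obtain ⟨M, hM⟩ := hcf.exists_bound_matTransform_cfMatrix φ hpq hφ
    (sform_div_one_eq_zero φ hη hzero) hneat
  exact ⟨⟨M, hM⟩, fun k hk hXk => hpq.finite_matTransform_cfMatrix φ hcf.1 hφΓ hk hXk hM⟩

/-- Theorem 3.1: for a σ-symmetric matrix `X` and a nontrivial zero `(ξ,η)` of its
σ-form, along a neat infinite subset `N` the matrices `X_{g_n,σ}` are bounded;
and if the entries of `X` lie in `k⁻¹Γ` then `{X_{g_n,σ} : n ∈ N}` is finite. -/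
theorem stmt_5 (Γ : Subring ℂ) (hdisc : DiscreteTopology Γ)
    (σ : ℂ → ℂ) (hσ : σ = id ∨ σ = fun x => (starRingEnd ℂ) x)
    (X : Matrix (Fin 2) (Fin 2) ℂ) (hX : X.transpose = X.map σ)
    (ξ η : ℂ) (hη : η ≠ 0) (hξη : ξ / η ∉ quotField Γ)
    (hzero : sform σ X ξ η = 0)
    (a zs p q : ℕ → ℂ) (hcf : IsCFE Γ (ξ / η) a zs) (hpq : IsQPair a p q)
    (N : Set ℕ) (hNinf : N.Infinite) (hneat : IsNeat zs q N) :
    (∃ M : ℝ, ∀ n ∈ N, ∀ i j : Fin 2,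
        ‖matTransform σ X (cfMatrix p q n) i j‖ ≤ M)
    ∧ (∀ k : ℕ, 0 < k →
        (∀ i j : Fin 2, ∃ γ ∈ Γ, X i j = γ / (k : ℂ)) →
        {Y : Matrix (Fin 2) (Fin 2) ℂ |
            ∃ n ∈ N, Y = matTransform σ X (cfMatrix p q n)}.Finite) :=
  stmt_5_general Γ hdisc σ hσ X ξ η hη hzero a zs p q hcf hpq N hneat
end

section
/- Let z be a root of a quadratic polynomial a·ζ² + b·ζ + c with a, b, c ∈ Γ which is irreducible over K. Let (a_n)_{n≥0} be a continued fraction expansion of z over Γ with iteration sequence (z_n)_{n≥0}, and suppose there exists an infinite neat subset N for the expansion. Then {z_{n+1} : n ∈ N} is finite. If moreover the continued fraction expansion is given by a Γ-valued continued fraction algorithm, then (a_n) is eventually periodic, i.e. there exist k ≥ 1 and n_0 such that a_{n+k} = a_n for all n ≥ n_0. -/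
lemma AddSubgroup.finite_setOf_mem_norm_le {E : Type*} [NormedAddCommGroup E] [ProperSpace E]
    (H : AddSubgroup E) [DiscreteTopology H] (M : ℝ) : {x | x ∈ H ∧ ‖x‖ ≤ M}.Finite := by
  refine (Metric.finite_isBounded_inter_isClosed (K := Metric.closedBall 0 M)
    (isDiscrete_iff_discreteTopology.mpr ‹_›) Metric.isBounded_closedBall
    AddSubgroup.isClosed_of_discrete).subset ?_
  rintro x ⟨hxH, hxM⟩
  exact ⟨mem_closedBall_zero_iff.mpr hxM, hxH⟩

section QuadraticRoots

variable {F : Type*} [Field F]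

open Polynomial in
lemma finite_setOf_quadratic_eq_zero {a : F} (ha : a ≠ 0) (b c : F) :
    {w | a * w ^ 2 + b * w + c = 0}.Finite := by
  have hP : C a * X ^ 2 + C b * X + C c ≠ 0 :=
    leadingCoeff_ne_zero.mp (by rwa [leadingCoeff_quadratic ha])
  simpa using finite_setOfPred_isRoot hP

def quadraticRoots (S : Set F) : Set F :=
  {w | ∃ a ∈ S, ∃ b ∈ S, ∃ c ∈ S, a ≠ 0 ∧ a * w ^ 2 + b * w + c = 0}

lemma Set.Finite.quadraticRoots {S : Set F} (hS : S.Finite) : (quadraticRoots S).Finite := by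
  refine ((hS.sdiff (t := {0})).biUnion fun a ha => hS.biUnion fun b _ => hS.biUnion fun c _ =>
    finite_setOf_quadratic_eq_zero (a := a) (fun h => ha.2 h) b c).subset ?_
  rintro w ⟨a, ha, b, hb, c, hc, ha0, hw⟩
  simp only [Set.mem_iUnion]
  exact ⟨a, ⟨ha, ha0⟩, b, hb, c, hc, hw⟩

end QuadraticRoots

section BinaryQuadraticForm

variable {R : Type*} [CommRing R]

def binQuad (A B C x y : R) : R :=
  A * x ^ 2 + B * x * y + C * y ^ 2

-- `F (x + x') (y + y') = F x y + G x y x' y' + F x' y'` for `F = binQuad A B C`,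
-- `G = binQuadPolar A B C`.
def binQuadPolar (A B C x y x' y' : R) : R :=
  2 * A * x * x' + B * (x * y' + x' * y) + 2 * C * y * y'

lemma binQuad_mem {S : Type*} [SetLike S R] [SubringClass S R] {Γ : S} {A B C x y : R}
    (hA : A ∈ Γ) (hB : B ∈ Γ) (hC : C ∈ Γ) (hx : x ∈ Γ) (hy : y ∈ Γ) :
    binQuad A B C x y ∈ Γ := by
  unfold binQuad
  aesop

lemma binQuadPolar_mem {S : Type*} [SetLike S R] [SubringClass S R] {Γ : S} {A B C x y x' y' : R}
    (hA : A ∈ Γ) (hB : B ∈ Γ) (hC : C ∈ Γ) (hx : x ∈ Γ) (hy : y ∈ Γ) (hx' : x' ∈ Γ)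
    (hy' : y' ∈ Γ) : binQuadPolar A B C x y x' y' ∈ Γ := by
  unfold binQuadPolar
  aesop

lemma binQuad_mul_sq_add_eq_zero {A B C z x y x' y' w : R} (hz : A * z ^ 2 + B * z + C = 0)
    (hw : z * (y * w + y') = x * w + x') :
    binQuad A B C x y * w ^ 2 + binQuadPolar A B C x y x' y' * w + binQuad A B C x' y' = 0 := by
  unfold binQuad binQuadPolar
  linear_combination (y * w + y') ^ 2 * hz
    - (A * ((x * w + x') + z * (y * w + y')) + B * (y * w + y')) * hw

section Vieta

variable {A B C z z' : R} (hsum : A * (z + z') + B = 0) (hprod : A * z * z' = C)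
include hsum hprod

lemma binQuad_eq_mul (x y : R) :
    binQuad A B C x y = A * ((y * z - x) * ((y * z - x) + y * (z' - z))) := by
  unfold binQuad
  linear_combination x * y * hsum - y ^ 2 * hprod

lemma binQuadPolar_eq_mul (x y x' y' : R) :
    binQuadPolar A B C x y x' y' = A * ((y * z - x) * ((y' * z - x') + y' * (z' - z))
      + (y' * z - x') * ((y * z - x) + y * (z' - z))) := by
  unfold binQuadPolar
  linear_combination (x * y' + x' * y) * hsum - 2 * y * y' * hprod

end Vieta

end BinaryQuadraticForm

lemma exists_add_eq_and_mul_eq_of_root {A B C z : ℂ} (hA : A ≠ 0)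
    (hz : A * z ^ 2 + B * z + C = 0) : ∃ z', A * (z + z') + B = 0 ∧ A * z * z' = C := by
  refine ⟨-B / A - z, ?_, ?_⟩
  · field_simp
    ring
  · field_simp
    linear_combination -hz

lemma norm_mul_add_mul_le {U W y d : ℂ} {K : ℝ} (hU : ‖U‖ ≤ 1) (hW : ‖W‖ ≤ 1)
    (hyU : ‖y‖ * ‖U‖ ≤ K) : ‖U * (W + y * d)‖ ≤ 1 + ‖d‖ * K :=
  calc ‖U * (W + y * d)‖ = ‖U * W + d * (y * U)‖ := by ring_nf
    _ ≤ ‖U‖ * ‖W‖ + ‖d‖ * (‖y‖ * ‖U‖) := by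
      simpa only [norm_mul] using norm_add_le (U * W) (d * (y * U))
    _ ≤ 1 + ‖d‖ * K := by
      gcongr
      exact mul_le_one₀ hU (norm_nonneg W) hW

lemma binQuad_ne_zero {Γ : Subring ℂ} {A B C x y : ℂ} (hA : A ≠ 0)
    (hirr : ∀ w ∈ quotField Γ, A * w ^ 2 + B * w + C ≠ 0) (hx : x ∈ Γ) (hy : y ∈ Γ)
    (hxy : x ≠ 0 ∨ y ≠ 0) : binQuad A B C x y ≠ 0 := by
  rcases eq_or_ne y 0 with rfl | hy0
  · simpa [binQuad, hA] using hxy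
  · have h := hirr (x / y) ⟨x, hx, y, hy, hy0, rfl⟩
    contrapose! h
    unfold binQuad at h
    field_simp
    linear_combination h

namespace IsQPair

variable {a p q : ℕ → ℂ}

lemma mem_s7 {Γ : Subring ℂ} (hpq : IsQPair a p q) (ha : ∀ n, a n ∈ Γ) :
    ∀ m, p m ∈ Γ ∧ q m ∈ Γ
  | 0 => by simp [hpq.1, hpq.2.2.2.1]
  | 1 => by simp [hpq.2.1, hpq.2.2.2.2.1, ha 0]
  | m + 2 => by
    rw [hpq.2.2.1, hpq.2.2.2.2.2]
    exact ⟨add_mem (mul_mem (ha _) (hpq.mem_s7 ha (m + 1)).1) (hpq.mem_s7 ha m).1,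
      add_mem (mul_mem (ha _) (hpq.mem_s7 ha (m + 1)).2) (hpq.mem_s7 ha m).2⟩

lemma det_s7 (hpq : IsQPair a p q) (m : ℕ) : p m * q (m + 1) - p (m + 1) * q m = (-1) ^ m := by
  obtain ⟨hp0, hp1, hp, hq0, hq1, hq⟩ := hpq
  induction m with
  | zero => simp [hp0, hp1, hq0, hq1]
  | succ m ih =>
    rw [hp, hq]
    linear_combination -ih

lemma err_add_two (hpq : IsQPair a p q) (z : ℂ) (m : ℕ) :
    q (m + 2) * z - p (m + 2) = a (m + 1) * (q (m + 1) * z - p (m + 1)) + (q m * z - p m) := by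
  rw [hpq.2.2.1, hpq.2.2.2.2.2]
  ring

end IsQPair

namespace IsCFE

variable {Γ : Subring ℂ} {z : ℂ} {a zs p q : ℕ → ℂ}

lemma zs_sub_ne_zero (hcf : IsCFE Γ z a zs) (m : ℕ) : zs m - a m ≠ 0 :=
  norm_pos_iff.mp (hcf.2.2.1 m).1

lemma zs_succ_mul_sub (hcf : IsCFE Γ z a zs) (m : ℕ) : zs (m + 1) * (zs m - a m) = 1 := by
  rw [hcf.2.2.2 m, inv_mul_cancel₀ (hcf.zs_sub_ne_zero m)]

variable (hcf : IsCFE Γ z a zs) (hpq : IsQPair a p q)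
include hcf hpq

lemma zs_succ_mul_err_succ (m : ℕ) :
    zs (m + 1) * (q (m + 1) * z - p (m + 1)) = -(q m * z - p m) := by
  induction m with
  | zero =>
    obtain ⟨hp0, hp1, -, hq0, hq1, -⟩ := hpq
    rw [hp0, hp1, hq0, hq1, ← hcf.2.1]
    linear_combination hcf.zs_succ_mul_sub 0
  | succ m ih =>
    rw [hpq.err_add_two]
    linear_combination zs (m + 2) * ih - (q (m + 1) * z - p (m + 1)) * hcf.zs_succ_mul_sub (m + 1)

lemma err_succ (m : ℕ) :
    q (m + 1) * z - p (m + 1) = -(zs m - a m) * (q m * z - p m) := by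
  linear_combination (zs m - a m) * hcf.zs_succ_mul_err_succ hpq m
    - (q (m + 1) * z - p (m + 1)) * hcf.zs_succ_mul_sub m

lemma err_ne_zero (m : ℕ) : q m * z - p m ≠ 0 := by
  induction m with
  | zero => simp [hpq.1, hpq.2.2.2.1]
  | succ m ih =>
    rw [hcf.err_succ hpq]
    exact mul_ne_zero (neg_ne_zero.mpr (hcf.zs_sub_ne_zero m)) ih

lemma norm_err_le_one (m : ℕ) : ‖q m * z - p m‖ ≤ 1 := by
  induction m with
  | zero => simp [hpq.1, hpq.2.2.2.1]
  | succ m ih =>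
    rw [hcf.err_succ hpq, norm_mul, norm_neg]
    exact mul_le_one₀ (hcf.2.2.1 m).2.le (norm_nonneg _) ih

lemma err_succ_mul_denom (m : ℕ) :
    (q (m + 1) * z - p (m + 1)) * (q (m + 1) * zs (m + 1) + q m) = (-1) ^ m := by
  linear_combination q (m + 1) * hcf.zs_succ_mul_err_succ hpq m + hpq.det_s7 m

lemma mul_denom_eq (m : ℕ) :
    z * (q (m + 1) * zs (m + 1) + q m) = p (m + 1) * zs (m + 1) + p m := by
  linear_combination hcf.zs_succ_mul_err_succ hpq m

lemma norm_q_mul_norm_err_mul_le {n : ℕ} (hq : ‖q n‖ ≤ ‖q (n + 1)‖) :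
    ‖q (n + 1)‖ * ‖q (n + 1) * z - p (n + 1)‖ * (‖zs (n + 1)‖ - 1) ≤ 1 := by
  set D := q (n + 1) * zs (n + 1) + q n
  have hUD : ‖q (n + 1) * z - p (n + 1)‖ * ‖D‖ = 1 := by
    rw [← norm_mul, hcf.err_succ_mul_denom hpq]
    simp
  have hD : ‖q (n + 1)‖ * (‖zs (n + 1)‖ - 1) ≤ ‖D‖ := by
    have := norm_sub_norm_le (q (n + 1) * zs (n + 1)) (-q n)
    rw [norm_mul, norm_neg, sub_neg_eq_add] at this
    linarith
  calc ‖q (n + 1)‖ * ‖q (n + 1) * z - p (n + 1)‖ * (‖zs (n + 1)‖ - 1)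
      = ‖q (n + 1) * z - p (n + 1)‖ * (‖q (n + 1)‖ * (‖zs (n + 1)‖ - 1)) := by ring
    _ ≤ ‖q (n + 1) * z - p (n + 1)‖ * ‖D‖ := by gcongr
    _ = 1 := hUD

lemma norm_q_mul_norm_err_le {n : ℕ} {α : ℝ} (hα : 1 < α) (hq : ‖q n‖ ≤ ‖q (n + 1)‖)
    (hz : α ≤ ‖zs (n + 1)‖) :
    ‖q (n + 1)‖ * ‖q (n + 1) * z - p (n + 1)‖ ≤ α / (α - 1) ∧
      ‖q (n + 1)‖ * ‖q n * z - p n‖ ≤ α / (α - 1) := by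
  set t := ‖q (n + 1)‖ * ‖q (n + 1) * z - p (n + 1)‖
  have ht := hcf.norm_q_mul_norm_err_mul_le hpq hq
  have h1 : t * (α - 1) ≤ 1 :=
    le_trans (mul_le_mul_of_nonneg_left (by linarith) (by positivity)) ht
  have hU : ‖q n * z - p n‖ = ‖zs (n + 1)‖ * ‖q (n + 1) * z - p (n + 1)‖ := by
    rw [← norm_mul, hcf.zs_succ_mul_err_succ hpq, norm_neg]
  rw [hU, le_div_iff₀ (by linarith), le_div_iff₀ (by linarith)]
  constructor <;> nlinarith [norm_nonneg (q (n + 1)), norm_nonneg (q (n + 1) * z - p (n + 1))]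

end IsCFE

lemma IsCFE.zs_succ_mem_quadraticRoots {Γ : Subring ℂ} {z : ℂ} {a zs p q : ℕ → ℂ}
    (hcf : IsCFE Γ z a zs) (hpq : IsQPair a p q) {A B C z' : ℂ} (hA : A ∈ Γ) (hB : B ∈ Γ)
    (hC : C ∈ Γ) (hA0 : A ≠ 0) (hirr : ∀ w ∈ quotField Γ, A * w ^ 2 + B * w + C ≠ 0)
    (hroot : A * z ^ 2 + B * z + C = 0) (hsum : A * (z + z') + B = 0) (hprod : A * z * z' = C)
    {n : ℕ} {α : ℝ} (hα : 1 < α) (hq : ‖q n‖ ≤ ‖q (n + 1)‖) (hz : α ≤ ‖zs (n + 1)‖) :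
    zs (n + 1) ∈
      quadraticRoots {x | x ∈ Γ ∧ ‖x‖ ≤ 2 * ‖A‖ * (1 + ‖z' - z‖ * (α / (α - 1)))} := by
  obtain ⟨hp₁, hq₁⟩ := hpq.mem_s7 hcf.1 (n + 1)
  obtain ⟨hp₀, hq₀⟩ := hpq.mem_s7 hcf.1 n
  have hU₁ := hcf.norm_err_le_one hpq (n + 1)
  have hU₀ := hcf.norm_err_le_one hpq n
  obtain ⟨h₁₁, h₁₀⟩ := hcf.norm_q_mul_norm_err_le hpq hα hq hz
  have h₀₁ := (mul_le_mul_of_nonneg_right hq (norm_nonneg _)).trans h₁₁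
  have h₀₀ := (mul_le_mul_of_nonneg_right hq (norm_nonneg _)).trans h₁₀
  have hK : 0 ≤ 1 + ‖z' - z‖ * (α / (α - 1)) := by
    have : 0 < α - 1 := by linarith
    positivity
  have hA' := norm_nonneg A
  refine ⟨_, ⟨binQuad_mem hA hB hC hp₁ hq₁, ?_⟩, _, ⟨binQuadPolar_mem hA hB hC hp₁ hq₁ hp₀ hq₀, ?_⟩,
    _, ⟨binQuad_mem hA hB hC hp₀ hq₀, ?_⟩, binQuad_ne_zero hA0 hirr hp₁ hq₁ ?_,
    binQuad_mul_sq_add_eq_zero hroot (hcf.mul_denom_eq hpq n)⟩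
  · rw [binQuad_eq_mul hsum hprod, norm_mul]
    nlinarith [norm_mul_add_mul_le (d := z' - z) hU₁ hU₁ h₁₁]
  · rw [binQuadPolar_eq_mul hsum hprod, norm_mul]
    nlinarith [norm_add_le ((q (n + 1) * z - p (n + 1)) * ((q n * z - p n) + q n * (z' - z)))
      ((q n * z - p n) * ((q (n + 1) * z - p (n + 1)) + q (n + 1) * (z' - z))),
      norm_mul_add_mul_le (d := z' - z) hU₁ hU₀ h₀₁, norm_mul_add_mul_le (d := z' - z) hU₀ hU₁ h₁₀]
  · rw [binQuad_eq_mul hsum hprod, norm_mul]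
    nlinarith [norm_mul_add_mul_le (d := z' - z) hU₀ hU₀ h₀₀]
  · by_contra! h
    exact hcf.err_ne_zero hpq (n + 1) (by simp [h])

lemma IsNeat.finite_zs_succ {Γ : Subring ℂ} (hdisc : DiscreteTopology Γ) {A B C : ℂ} (hA : A ∈ Γ)
    (hB : B ∈ Γ) (hC : C ∈ Γ) (hA0 : A ≠ 0)
    (hirr : ∀ w ∈ quotField Γ, A * w ^ 2 + B * w + C ≠ 0) {z : ℂ}
    (hroot : A * z ^ 2 + B * z + C = 0) {a zs p q : ℕ → ℂ} (hcf : IsCFE Γ z a zs)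
    (hpq : IsQPair a p q) {N : Set ℕ} (hneat : IsNeat zs q N) :
    {w : ℂ | ∃ n ∈ N, w = zs (n + 1)}.Finite := by
  obtain ⟨hqN, α, hα, hsmall⟩ := hneat
  obtain ⟨z', hsum, hprod⟩ := exists_add_eq_and_mul_eq_of_root hA0 hroot
  have : DiscreteTopology Γ.toAddSubgroup := hdisc
  refine ((hsmall.image fun n => zs (n + 1)).union (Γ.toAddSubgroup.finite_setOf_mem_norm_le
    (2 * ‖A‖ * (1 + ‖z' - z‖ * (α / (α - 1))))).quadraticRoots).subset ?_
  rintro _ ⟨n, hn, rfl⟩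
  by_cases hz : ‖zs (n + 1)‖ < α
  · exact Or.inl ⟨n, ⟨hn, hz⟩, rfl⟩
  · exact Or.inr (hcf.zs_succ_mem_quadraticRoots hpq hA hB hC hA0 hirr hroot hsum hprod hα
      (hqN n hn) (not_lt.mp hz))

lemma exists_eventually_periodic_of_eq {X : Type*} {x : ℕ → X} {T : X → X}
    (hx : ∀ n, x (n + 1) = T (x n)) {i j : ℕ} (hij : i ≠ j) (h : x i = x j) :
    ∃ k : ℕ, 1 ≤ k ∧ ∃ n₀ : ℕ, ∀ n ≥ n₀, x (n + k) = x n := by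
  wlog hlt : i < j generalizing i j
  · exact this hij.symm h.symm (by omega)
  have hshift : ∀ d, x (i + d) = x (j + d) := by
    intro d
    induction d with
    | zero => exact h
    | succ d ih => rw [← add_assoc, ← add_assoc, hx, hx, ih]
  refine ⟨j - i, by omega, i, fun n hn => ?_⟩
  obtain ⟨d, rfl⟩ := Nat.exists_eq_add_of_le hn
  rw [show i + d + (j - i) = j + d by omega, hshift]

/-- Corollary 3.4 (Lagrange-type theorem): if `z` is a root of a quadratic polynomial
`A ζ² + B ζ + C` with `A, B, C ∈ Γ` which is irreducible over the quotient field `K`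
(equivalently: `A ≠ 0` and the polynomial has no root in `K`), and the expansion admits
an infinite neat subset `N`, then `{z_{n+1} : n ∈ N}` is finite; and if the expansion is
given by an algorithm then the partial quotients are eventually periodic. -/
theorem stmt_7 (Γ : Subring ℂ) (hdisc : DiscreteTopology Γ)
    (A B C : ℂ) (hA : A ∈ Γ) (hB : B ∈ Γ) (hC : C ∈ Γ) (hA0 : A ≠ 0)
    (hirr : ∀ w ∈ quotField Γ, A * w ^ 2 + B * w + C ≠ 0)
    (z : ℂ) (hroot : A * z ^ 2 + B * z + C = 0)
    (a zs p q : ℕ → ℂ) (hcf : IsCFE Γ z a zs) (hpq : IsQPair a p q)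
    (N : Set ℕ) (hNinf : N.Infinite) (hneat : IsNeat zs q N) :
    {w : ℂ | ∃ n ∈ N, w = zs (n + 1)}.Finite
    ∧ ((∃ f : ℂ → ℂ, (∀ ζ : ℂ, f ζ ∈ Γ) ∧ (∀ ζ : ℂ, ‖ζ - f ζ‖ < 1) ∧
          ∀ n, a n = f (zs n))
        → ∃ k : ℕ, 1 ≤ k ∧ ∃ n₀ : ℕ, ∀ n ≥ n₀, a (n + k) = a n) := by
  have hfin := hneat.finite_zs_succ hdisc hA hB hC hA0 hirr hroot hcf hpq
  refine ⟨hfin, ?_⟩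
  rintro ⟨f, -, -, hf⟩
  have hmaps : Set.MapsTo (fun n => zs (n + 1)) N {w | ∃ n ∈ N, w = zs (n + 1)} :=
    fun n hn => ⟨n, hn, rfl⟩
  obtain ⟨i, -, j, -, hij, heq⟩ := hNinf.exists_ne_map_eq_of_mapsTo hmaps hfin
  obtain ⟨k, hk, n₀, hper⟩ := exists_eventually_periodic_of_eq (T := fun ζ => (ζ - f ζ)⁻¹)
    (fun n => by rw [hcf.2.2.2 n, hf n]) (i := i + 1) (j := j + 1) (by omega) heq
  exact ⟨k, hk, n₀, fun n hn => by rw [hf, hf, hper n hn]⟩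
end

section
/- Let Γ be a Euclidean subring of ℂ with quotient field K. Let κ ∈ K and r > 0 with r² ∈ ℚ. Then the following are equivalent: (i) all points of the circle C(κ, r) are badly approximable with respect to Γ; (ii) all points of the circle C(0, r) are badly approximable with respect to Γ; (iii) r² is not of the form s/t where s and t are norms of elements of Γ, i.e. there do not exist p, q ∈ Γ with r² = (p·p̄)/(q·q̄). -/
open Submodule Module

/-- `z ∈ ℂ` is badly approximable with respect to `Γ`. -/
def BadlyApprox (Γ : Subring ℂ) (z : ℂ) : Prop :=
  ∃ δ : ℝ, 0 < δ ∧ ∀ p ∈ Γ, ∀ q ∈ Γ, q ≠ (0 : ℂ) →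
    δ / ‖q‖ ^ 2 ≤ ‖z - p / q‖


lemma gap_lemma (Γ : Subring ℂ) (hdisc : DiscreteTopology Γ) :
    ∃ c > 0, c ≤ 1 ∧ ∀ γ ∈ Γ, γ ≠ 0 → c ≤ ‖γ‖ := by
  have h0 : IsOpen ({⟨0, Γ.zero_mem⟩} : Set Γ) := isOpen_discrete _
  rw [Metric.isOpen_iff] at h0
  obtain ⟨ε, hε, hball⟩ := h0 ⟨0, Γ.zero_mem⟩ rfl
  refine ⟨min ε 1, by positivity, min_le_right _ _, fun γ hγ hne => ?_⟩
  by_contra hlt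
  push_neg at hlt
  have : (⟨γ, hγ⟩ : Γ) ∈ Metric.ball (⟨0, Γ.zero_mem⟩ : Γ) ε := by
    rw [Metric.mem_ball, Subtype.dist_eq]
    simp only [Complex.dist_eq, sub_zero]
    exact lt_of_lt_of_le hlt (min_le_left _ _)
  have := hball this
  simp only [Set.mem_singleton_iff, Subtype.mk_eq_mk] at this
  exact hne this

lemma int_of_rat_integral {x : ℂ} (hx : IsIntegral ℤ x) (q : ℚ) (hq : x = (q : ℂ)) :
    ∃ n : ℤ, x = (n : ℂ) := by
  have hinj : Function.Injective (algebraMap ℚ ℂ) := (algebraMap ℚ ℂ).injective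
  have : IsIntegral ℤ q := by
    rw [← isIntegral_algebraMap_iff hinj]
    have : algebraMap ℚ ℂ q = x := by rw [hq]; simp
    rwa [this]
  obtain ⟨n, hn⟩ := IsIntegrallyClosed.isIntegral_iff.mp this
  exact ⟨n, by rw [hq, ← hn]; simp⟩



-- integrality of elements of a discrete subring
lemma integral_of_discrete (Γ : Subring ℂ) (hdisc : DiscreteTopology Γ) {γ : ℂ}
    (hγ : γ ∈ Γ) : IsIntegral ℤ γ := by
  set A := Algebra.adjoin ℤ ({γ} : Set ℂ) with hA
  have hAle : (A : Set ℂ) ⊆ (Γ : Set ℂ) := by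
    have : A ≤ subalgebraOfSubring Γ :=
      Algebra.adjoin_le (by simpa [mem_subalgebraOfSubring] using hγ)
    exact fun x hx => (mem_subalgebraOfSubring).mp (this hx)
  have hdA : DiscreteTopology (Subalgebra.toSubmodule A : Set ℂ) :=
    DiscreteTopology.of_subset (s := (Γ : Set ℂ)) hdisc hAle
  have : DiscreteTopology (Subalgebra.toSubmodule A) := hdA
  have hfin : Module.Finite ℤ (Subalgebra.toSubmodule A) := inferInstance
  exact IsIntegral.of_mem_of_fg A (Module.Finite.iff_fg.mp hfin) γ
    (Algebra.self_mem_adjoin_singleton ℤ γ)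



-- nonreal case: quadratic integer relation
lemma quad_rel (Γ : Subring ℂ) (hdisc : DiscreteTopology Γ) {γ : ℂ}
    (hγ : γ ∈ Γ) (him : γ.im ≠ 0) :
    ∃ a b c : ℤ, ¬(a = 0 ∧ b = 0 ∧ c = 0) ∧ (a : ℂ) + b * γ + c * γ ^ 2 = 0 := by
  set A := Algebra.adjoin ℤ ({γ} : Set ℂ) with hA
  have hAle : (A : Set ℂ) ⊆ (Γ : Set ℂ) := by
    have : A ≤ subalgebraOfSubring Γ :=
      Algebra.adjoin_le (by simpa [mem_subalgebraOfSubring] using hγ)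
    exact fun x hx => (mem_subalgebraOfSubring).mp (this hx)
  set M := Subalgebra.toSubmodule A with hM
  have : DiscreteTopology M := DiscreteTopology.of_subset (s := (Γ : Set ℂ)) hdisc hAle
  have hfin : Module.Finite ℤ M := inferInstance
  have h1 : (1 : ℂ) ∈ M := A.one_mem
  have hγM : γ ∈ M := Algebra.self_mem_adjoin_singleton ℤ γ
  have hγ2 : γ ^ 2 ∈ M := A.pow_mem hγM 2
  have hspan : span ℝ (M : Set ℂ) = ⊤ := by
    rw [eq_top_iff]
    rintro z -
    have hz : z = (z.re - z.im * γ.re / γ.im) • (1 : ℂ) + (z.im / γ.im) • γ := by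
      apply Complex.ext <;>
      simp [Complex.real_smul, Complex.add_re, Complex.add_im, Complex.mul_re,
        Complex.mul_im] <;> field_simp <;> ring
    rw [hz]
    exact add_mem (smul_mem _ _ (subset_span h1)) (smul_mem _ _ (subset_span hγM))
  have : IsZLattice ℝ M := ⟨hspan⟩
  have hrank : finrank ℤ M = 2 := by
    rw [ZLattice.rank ℝ M, Complex.finrank_real_complex]
  set v : Fin 3 → M := ![⟨1, h1⟩, ⟨γ, hγM⟩, ⟨γ ^ 2, hγ2⟩] with hv
  have hnli : ¬ LinearIndependent ℤ v := by
    intro hli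
    have := hli.fintype_card_le_finrank
    rw [hrank] at this
    simp at this
  obtain ⟨g, hsum, i, hgi⟩ := Fintype.not_linearIndependent_iff.mp hnli
  refine ⟨g 0, g 1, g 2, ?_, ?_⟩
  · rintro ⟨h0, h1', h2⟩
    fin_cases i <;> simp_all
  · have := congrArg (Subtype.val : M → ℂ) hsum
    simpa [hv, Fin.sum_univ_three, zsmul_eq_mul, mul_comm] using this



-- real case: linear integer relation
lemma lin_rel (Γ : Subring ℂ) (hdisc : DiscreteTopology Γ) {γ : ℂ}
    (hγ : γ ∈ Γ) (him : γ.im = 0) :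
    ∃ a b : ℤ, ¬(a = 0 ∧ b = 0) ∧ (a : ℝ) + b * γ.re = 0 := by
  set A := Algebra.adjoin ℤ ({γ.re} : Set ℝ) with hA
  have hmap : ∀ x ∈ A, (x : ℂ) ∈ Γ := by
    intro x hx
    have : Complex.ofRealHom.toIntAlgHom γ.re = γ := by
      simp [RingHom.toIntAlgHom]
      exact Complex.ext rfl him.symm
    have himg : (x : ℂ) ∈ A.map Complex.ofRealHom.toIntAlgHom :=
      ⟨x, hx, rfl⟩
    rw [AlgHom.map_adjoin, Set.image_singleton, this] at himg
    have hle : Algebra.adjoin ℤ ({γ} : Set ℂ) ≤ subalgebraOfSubring Γ :=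
      Algebra.adjoin_le (by simpa [mem_subalgebraOfSubring] using hγ)
    exact (mem_subalgebraOfSubring).mp (hle himg)
  set M := Subalgebra.toSubmodule A with hM
  have hpre : DiscreteTopology ((Complex.ofRealHom : ℝ → ℂ) ⁻¹' (Γ : Set ℂ)) :=
    DiscreteTopology.preimage_of_continuous_injective _ Complex.continuous_ofReal
      Complex.ofReal_injective
  have : DiscreteTopology M :=
    DiscreteTopology.of_subset (s := ((Complex.ofRealHom : ℝ → ℂ) ⁻¹' (Γ : Set ℂ))) hpre
      (fun x hx => hmap x hx)
  have hfin : Module.Finite ℤ M := inferInstance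
  have h1 : (1 : ℝ) ∈ M := A.one_mem
  have hγM : γ.re ∈ M := Algebra.self_mem_adjoin_singleton ℤ γ.re
  have hspan : span ℝ (M : Set ℝ) = ⊤ := by
    rw [eq_top_iff]
    rintro z -
    have hz : z = z • (1 : ℝ) := by simp
    rw [hz]
    exact smul_mem _ _ (subset_span h1)
  have : IsZLattice ℝ M := ⟨hspan⟩
  have hrank : finrank ℤ M = 1 := by
    rw [ZLattice.rank ℝ M, finrank_self]
  set v : Fin 2 → M := ![⟨1, h1⟩, ⟨γ.re, hγM⟩] with hv
  have hnli : ¬ LinearIndependent ℤ v := by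
    intro hli
    have := hli.fintype_card_le_finrank
    rw [hrank] at this
    simp at this
  obtain ⟨g, hsum, i, hgi⟩ := Fintype.not_linearIndependent_iff.mp hnli
  refine ⟨g 0, g 1, ?_, ?_⟩
  · rintro ⟨h0, h1'⟩
    fin_cases i <;> simp_all
  · have := congrArg (Subtype.val : M → ℝ) hsum
    simpa [hv, Fin.sum_univ_two, zsmul_eq_mul, mul_comm] using this

lemma norm_int (Γ : Subring ℂ) (hdisc : DiscreteTopology Γ) {γ : ℂ} (hγ : γ ∈ Γ) :
    ∃ n : ℤ, γ * (starRingEnd ℂ) γ = (n : ℂ) := by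
  have hint : IsIntegral ℤ γ := integral_of_discrete Γ hdisc hγ
  have hconj : IsIntegral ℤ ((starRingEnd ℂ) γ) := by
    have := hint.map (starRingEnd ℂ).toIntAlgHom
    simpa [RingHom.toIntAlgHom] using this
  have hx : IsIntegral ℤ (γ * (starRingEnd ℂ) γ) := hint.mul hconj
  by_cases him : γ.im = 0
  · -- real case
    obtain ⟨a, b, hab, hrel⟩ := lin_rel Γ hdisc hγ him
    have hb : b ≠ 0 := by
      rintro rfl
      push_cast at hrel
      simp at hrel
      exact hab ⟨by exact_mod_cast hrel, rfl⟩
    have hb' : (b : ℝ) ≠ 0 := by exact_mod_cast hb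
    have heq : γ.re = ((-a / b : ℚ) : ℝ) := by
      push_cast
      rw [eq_div_iff hb']
      linear_combination hrel
    refine int_of_rat_integral hx ((-a / b : ℚ) ^ 2) ?_
    have h2 : (Complex.normSq γ : ℝ) = (((-a / b : ℚ) ^ 2 : ℚ) : ℝ) := by
      rw [Complex.normSq_apply, him, heq]
      push_cast
      ring
    rw [Complex.mul_conj, h2]
    norm_cast
  · -- nonreal case
    obtain ⟨a, b, c, habc, hrel⟩ := quad_rel Γ hdisc hγ him
    have hrel_im : (b : ℝ) * γ.im + c * (γ.re * γ.im + γ.im * γ.re) = 0 := by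
      have := congrArg Complex.im hrel
      simpa [Complex.add_im, Complex.mul_im, pow_two, Complex.mul_re] using this
    have hrel_re : (a : ℝ) + b * γ.re + c * (γ.re * γ.re - γ.im * γ.im) = 0 := by
      have := congrArg Complex.re hrel
      simpa [Complex.add_re, Complex.mul_re, Complex.mul_im, pow_two] using this
    have hbc : (b : ℝ) + c * (2 * γ.re) = 0 := by
      have h : γ.im * ((b : ℝ) + c * (2 * γ.re)) = 0 := by linear_combination hrel_im
      rcases mul_eq_zero.mp h with h | h
      · exact absurd h him
      · exact h
    have hc : c ≠ 0 := by
      rintro rfl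
      have hb0 : (b : ℝ) = 0 := by push_cast at hbc ⊢; linarith
      have hb : b = 0 := by exact_mod_cast hb0
      subst hb
      have ha : (a : ℝ) = 0 := by push_cast at hrel_re; linarith
      have : a = 0 := by exact_mod_cast ha
      exact habc ⟨this, rfl, rfl⟩
    have hc' : (c : ℝ) ≠ 0 := by exact_mod_cast hc
    refine int_of_rat_integral hx ((a : ℚ) / c) ?_
    have h2 : (Complex.normSq γ : ℝ) = (((a : ℚ) / c : ℚ) : ℝ) := by
      rw [Complex.normSq_apply]
      push_cast
      rw [eq_div_iff hc']
      linear_combination -hrel_re + γ.re * hbc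
    rw [Complex.mul_conj, h2]
    norm_cast

lemma ba_translate (Γ : Subring ℂ) {z : ℂ} (hz : BadlyApprox Γ z) {p₀ q₀ : ℂ}
    (hp₀ : p₀ ∈ Γ) (hq₀ : q₀ ∈ Γ) (hq₀0 : q₀ ≠ 0) : BadlyApprox Γ (z + p₀ / q₀) := by
  obtain ⟨δ, hδ, hb⟩ := hz
  have habs₀ : 0 < ‖q₀‖ := norm_pos_iff.mpr hq₀0
  refine ⟨δ / ‖q₀‖ ^ 2, by positivity, fun p hp q hq hq0 => ?_⟩
  have key : z + p₀ / q₀ - p / q = z - (p * q₀ - p₀ * q) / (q * q₀) := by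
    field_simp
    ring
  rw [key]
  have h := hb (p * q₀ - p₀ * q) (Γ.sub_mem (Γ.mul_mem hp hq₀) (Γ.mul_mem hp₀ hq))
    (q * q₀) (Γ.mul_mem hq hq₀) (mul_ne_zero hq0 hq₀0)
  calc δ / ‖q₀‖ ^ 2 / ‖q‖ ^ 2
      = δ / ‖q * q₀‖ ^ 2 := by
        rw [norm_mul, mul_pow, div_div]
        ring_nf
    _ ≤ _ := h

lemma ba_circle (Γ : Subring ℂ) (hdisc : DiscreteTopology Γ) (r : ℝ) (hr : 0 < r)
    (s : ℚ) (hs : (s : ℝ) = r ^ 2)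
    (hiii : ¬∃ p ∈ Γ, ∃ q ∈ Γ,
      ((r : ℂ) ^ 2 = (p * (starRingEnd ℂ) p) / (q * (starRingEnd ℂ) q)))
    {z : ℂ} (hz : ‖z‖ = r) : BadlyApprox Γ z := by
  obtain ⟨c, hc, hc1, hgap⟩ := gap_lemma Γ hdisc
  set T : ℝ := (s.den : ℝ) with hT
  have hT0 : 0 < T := by rw [hT]; exact_mod_cast s.den_pos
  have hnum : (s.num : ℝ) = T * r ^ 2 := by
    rw [← hs, hT]
    rw [Rat.cast_def]
    field_simp
  refine ⟨min (r * c ^ 2) (1 / (3 * r * T)), by positivity, fun p hp q hq hq0 => ?_⟩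
  have hq_abs : c ≤ ‖q‖ := hgap q hq hq0
  have hq_pos : 0 < ‖q‖ := norm_pos_iff.mpr hq0
  set d := ‖z - p / q‖ with hd
  have hd0 : 0 ≤ d := norm_nonneg _
  by_cases hcase : r ≤ d
  · calc min (r * c ^ 2) (1 / (3 * r * T)) / ‖q‖ ^ 2
        ≤ r * c ^ 2 / c ^ 2 := by
          apply div_le_div₀ (by positivity) (min_le_left _ _) (by positivity)
          exact pow_le_pow_left₀ (le_of_lt hc) hq_abs 2
      _ = r := by field_simp
      _ ≤ d := hcase
  · push_neg at hcase
    -- |p| < 2 r |q|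
    have hpq : ‖p / q‖ < 2 * r := by
      have : ‖p / q‖ ≤ ‖z‖ + d := by
        have : p / q = z - (z - p / q) := by ring
        rw [this]
        exact (norm_sub_le _ _).trans (by rw [hd])
      linarith [this, hz ▸ hcase]
    have hp_abs : ‖p‖ < 2 * r * ‖q‖ := by
      rw [norm_div, div_lt_iff₀ hq_pos] at hpq
      linarith [hpq]
    -- integer norms
    obtain ⟨Np, hNp⟩ := norm_int Γ hdisc hp
    obtain ⟨Nq, hNq⟩ := norm_int Γ hdisc hq
    have hNp' : (Np : ℝ) = ‖p‖ ^ 2 := by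
      have : ((Complex.normSq p : ℝ) : ℂ) = ((Np : ℝ) : ℂ) := by
        rw [← Complex.mul_conj, hNp]; norm_num
      have := Complex.ofReal_inj.mp this
      rw [← this, Complex.sq_norm]
    have hNq' : (Nq : ℝ) = ‖q‖ ^ 2 := by
      have : ((Complex.normSq q : ℝ) : ℂ) = ((Nq : ℝ) : ℂ) := by
        rw [← Complex.mul_conj, hNq]; norm_num
      have := Complex.ofReal_inj.mp this
      rw [← this, Complex.sq_norm]
    have hNq0 : (0 : ℝ) < Nq := by rw [hNq']; positivity
    -- the integer A is nonzero
    have hA : (s.den : ℤ) * Np - s.num * Nq ≠ 0 := by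
      intro h0
      apply hiii
      refine ⟨p, hp, q, hq, ?_⟩
      have hNq0' : (Nq : ℝ) ≠ 0 := ne_of_gt hNq0
      have hr2 : r ^ 2 = (Np : ℝ) / Nq := by
        have h0' : (s.den : ℝ) * Np - (s.num : ℝ) * Nq = 0 := by
          have := congrArg (fun x : ℤ => (x : ℝ)) h0
          push_cast at this
          linarith [this]
        rw [hnum] at h0'
        field_simp
        nlinarith [h0', hT0]
      rw [hNp, hNq]
      have h5 := congrArg (Complex.ofReal) hr2
      push_cast at h5 ⊢
      exact h5
    have hA1 : (1 : ℝ) ≤ |(s.den : ℝ) * Np - (s.num : ℝ) * Nq| := by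
      have : (1 : ℤ) ≤ |(s.den : ℤ) * Np - s.num * Nq| := Int.one_le_abs hA
      calc (1:ℝ) = ((1:ℤ):ℝ) := by norm_num
        _ ≤ (|(s.den : ℤ) * Np - s.num * Nq| : ℝ) := by exact_mod_cast this
        _ = |(s.den : ℝ) * Np - (s.num : ℝ) * Nq| := by push_cast; ring_nf
    -- rewrite as T * |  |p|² - r²|q|² |
    have key : (s.den : ℝ) * Np - (s.num : ℝ) * Nq
        = T * (‖p‖ ^ 2 - r ^ 2 * ‖q‖ ^ 2) := by
      rw [hNp', hNq', hnum, hT]; ring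
    -- reverse triangle inequality
    have htri : |‖p‖ - r * ‖q‖| ≤ d * ‖q‖ := by
      have h1 : |‖p‖ - ‖z * q‖| ≤ ‖p - z * q‖ :=
        abs_norm_sub_norm_le _ _
      have h2 : ‖z * q‖ = r * ‖q‖ := by rw [norm_mul, hz]
      have h3 : ‖p - z * q‖ = d * ‖q‖ := by
        have e : p - z * q = (p / q - z) * q := by
          field_simp
        rw [e, norm_mul, norm_sub_rev]
      rw [h2, h3] at h1
      exact h1
    have hfac : |‖p‖ ^ 2 - r ^ 2 * ‖q‖ ^ 2|
        ≤ (d * ‖q‖) * (‖p‖ + r * ‖q‖) := by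
      have : ‖p‖ ^ 2 - r ^ 2 * ‖q‖ ^ 2
          = (‖p‖ - r * ‖q‖) * (‖p‖ + r * ‖q‖) := by ring
      rw [this, abs_mul, abs_of_nonneg (show (0:ℝ) ≤ ‖p‖ + r * ‖q‖ by positivity)]
      exact mul_le_mul_of_nonneg_right htri (by positivity)
    have hsum : ‖p‖ + r * ‖q‖ ≤ 3 * r * ‖q‖ := by
      linarith [hp_abs]
    -- combine
    have h4 : (1:ℝ) ≤ T * |‖p‖ ^ 2 - r ^ 2 * ‖q‖ ^ 2| := by
      calc (1:ℝ) ≤ |(s.den : ℝ) * Np - (s.num : ℝ) * Nq| := hA1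
        _ = T * |‖p‖ ^ 2 - r ^ 2 * ‖q‖ ^ 2| := by
          rw [key, abs_mul, abs_of_pos hT0]
    have hstep : |‖p‖ ^ 2 - r ^ 2 * ‖q‖ ^ 2|
        ≤ (d * ‖q‖) * (3 * r * ‖q‖) :=
      hfac.trans (mul_le_mul_of_nonneg_left hsum (by positivity))
    have hmain : 1 ≤ T * ((d * ‖q‖) * (3 * r * ‖q‖)) :=
      h4.trans (mul_le_mul_of_nonneg_left hstep hT0.le)
    calc min (r * c ^ 2) (1 / (3 * r * T)) / ‖q‖ ^ 2
        ≤ (1 / (3 * r * T)) / ‖q‖ ^ 2 := by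
          gcongr
          exact min_le_right _ _
      _ ≤ d := by
          rw [div_div, div_le_iff₀ (by positivity)]
          calc (1:ℝ) ≤ T * ((d * ‖q‖) * (3 * r * ‖q‖)) := hmain
            _ = d * (3 * r * T * ‖q‖ ^ 2) := by ring


/-- Corollary 4.5: for a Euclidean subring `Γ` of `ℂ`, `κ ∈ K` and `r > 0` with
`r² ∈ ℚ`, the following are equivalent: (i) every point of the circle `C(κ,r)` is
badly approximable; (ii) every point of `C(0,r)` is badly approximable; (iii) `r²` is
not a quotient of norms of elements of `Γ`. -/
theorem stmt_12 (Γ : Subring ℂ) (hdisc : DiscreteTopology Γ)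
    (heucl : ∀ w : ℂ, ∃ γ ∈ Γ, ‖w - γ‖ < 1)
    (κ : ℂ) (hκ : κ ∈ quotField Γ) (r : ℝ) (hr : 0 < r)
    (hr2 : ∃ s : ℚ, (s : ℝ) = r ^ 2) :
    ((∀ z : ℂ, ‖z - κ‖ = r → BadlyApprox Γ z) ↔
      (∀ z : ℂ, ‖z‖ = r → BadlyApprox Γ z))
    ∧ ((∀ z : ℂ, ‖z‖ = r → BadlyApprox Γ z) ↔
      ¬∃ p ∈ Γ, ∃ q ∈ Γ,
        ((r : ℂ) ^ 2 = (p * (starRingEnd ℂ) p) / (q * (starRingEnd ℂ) q))) := by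
  obtain ⟨p₀, hp₀, q₀, hq₀, hq₀0, hκeq⟩ := hκ
  obtain ⟨s, hs⟩ := hr2
  constructor
  · constructor
    · intro h z hzr
      have h1 : ‖z + κ - κ‖ = r := by simpa using hzr
      have h3 := ba_translate Γ (h (z + κ) h1) (Γ.neg_mem hp₀) hq₀ hq₀0
      have he : z + κ + -p₀ / q₀ = z := by rw [neg_div, ← hκeq]; ring
      rwa [he] at h3
    · intro h z hzr
      have h3 := ba_translate Γ (h (z - κ) hzr) hp₀ hq₀ hq₀0
      have he : z - κ + p₀ / q₀ = z := by rw [← hκeq]; ring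
      rwa [he] at h3
  · constructor
    · rintro h ⟨p, hp, q, hq, heq⟩
      have hq0 : q ≠ 0 := by
        rintro rfl
        have h1 : (r : ℂ) ^ 2 = 0 := by simpa using heq
        have h2 : (r : ℂ) = 0 := by
          exact pow_eq_zero_iff two_ne_zero |>.mp h1
        have : r = 0 := by exact_mod_cast h2
        exact absurd this hr.ne'
      have hq0' : Complex.normSq q ≠ 0 := by
        simpa [Complex.normSq_eq_zero] using hq0
      have hsq : ‖p / q‖ ^ 2 = r ^ 2 := by
        rw [Complex.mul_conj, Complex.mul_conj] at heq
        have h1 : ((r ^ 2 : ℝ) : ℂ) = ((Complex.normSq p / Complex.normSq q : ℝ) : ℂ) := by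
          push_cast
          exact heq
        have h2 := Complex.ofReal_inj.mp h1
        rw [norm_div, div_pow, Complex.sq_norm, Complex.sq_norm]
        exact h2.symm
      have habs : ‖p / q‖ = r := by
        have hfac : (‖p / q‖ - r) * (‖p / q‖ + r) = 0 := by
          nlinarith [hsq]
        rcases mul_eq_zero.mp hfac with h1 | h1
        · linarith
        · nlinarith [norm_nonneg (p / q), hr]
      obtain ⟨δ, hδ, hb⟩ := h (p / q) habs
      have hble := hb p hp q hq hq0
      rw [sub_self, norm_zero] at hble
      have hqa : 0 < ‖q‖ := norm_pos_iff.mpr hq0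
      have : (0 : ℝ) < δ / ‖q‖ ^ 2 := by positivity
      linarith
    · intro h z hz
      exact ba_circle Γ hdisc r hr s hs h hz
end

section
/- Let Γ be a discrete subring of ℂ containing 1. Let γ_0, γ_1, γ_2 ∈ ℂ be such that |γ_0| > 1, |γ_1| > 1, 0 < |γ_2| ≤ 1, and γ_j − γ_{j−1}^{−1} ∈ Γ for j = 1, 2. For j = 1, 2 set α_j = γ_j − γ_{j−1}^{−1}, and suppose |α_2| > 1. Then |α_2| < 2, γ_1 lies in the closed disc of center −ᾱ_2/(|α_2|² − 1) and radius 1/(|α_2|² − 1), and α_1 lies in the open disc of center −ᾱ_2/(|α_2|² − 1) and radius |α_2|²/(|α_2|² − 1), i.e. |(|α_2|² − 1)·α_1 + ᾱ_2| < |α_2|². -/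
/-!
Write `α = γ₂ - γ₁⁻¹` and `t = |α|² - 1 > 0`. The bound `|α| < 2` is the triangle inequality.
Since `γ₂ γ₁ = α γ₁ + 1` and `|γ₂| ≤ 1`, we get `|α γ₁ + 1| ≤ |γ₁|`, and the identity
`|t z + ᾱ|² - 1 = t (|α z + 1|² - |z|²)` turns this into `|t γ₁ + ᾱ| ≤ 1`, which is the closed-disc
statement for `γ₁`. Finally `α₁ = γ₁ - γ₀⁻¹` with `|γ₀⁻¹| < 1`, and `1/t + 1 = |α|²/t`.
-/

open ComplexConjugate Metric

namespace Complex

theorem norm_sq_ofReal_mul_add_conj_sub_one (α z : ℂ) :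
    ‖((‖α‖ ^ 2 - 1 : ℝ) : ℂ) * z + conj α‖ ^ 2 - 1
      = (‖α‖ ^ 2 - 1) * (‖α * z + 1‖ ^ 2 - ‖z‖ ^ 2) := by
  simp only [Complex.sq_norm, normSq_apply, add_re, add_im, mul_re, mul_im, ofReal_re, ofReal_im,
    conj_re, conj_im, one_re, one_im]
  ring

theorem norm_ofReal_mul_add_conj_le_one {α z : ℂ} (hα : 1 ≤ ‖α‖) (h : ‖α * z + 1‖ ≤ ‖z‖) :
    ‖((‖α‖ ^ 2 - 1 : ℝ) : ℂ) * z + conj α‖ ≤ 1 := by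
  have ht : 0 ≤ ‖α‖ ^ 2 - 1 := by nlinarith
  have hsq : ‖α * z + 1‖ ^ 2 ≤ ‖z‖ ^ 2 := pow_le_pow_left₀ (norm_nonneg _) h 2
  rw [← sq_le_one_iff₀ (norm_nonneg _), ← sub_nonpos, norm_sq_ofReal_mul_add_conj_sub_one]
  exact mul_nonpos_of_nonneg_of_nonpos ht (sub_nonpos.mpr hsq)

theorem dist_neg_div_ofReal {t : ℝ} (ht : 0 < t) (z w : ℂ) :
    dist z (-w / t) = ‖t * z + w‖ / t := by
  have ht' : (t : ℂ) ≠ 0 := ofReal_ne_zero.mpr ht.ne'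
  rw [dist_eq, show z - -w / t = (t * z + w) / t by field_simp; ring, norm_div, norm_real,
    Real.norm_of_nonneg ht.le]

end Complex

theorem stmt_14_general
    (γ₀ γ₁ γ₂ : ℂ)
    (h0 : 1 < ‖γ₀‖) (h1 : 1 < ‖γ₁‖)
    (h2le : ‖γ₂‖ ≤ 1)
    (hα2 : 1 < ‖γ₂ - γ₁⁻¹‖) :
    ‖γ₂ - γ₁⁻¹‖ < 2
    ∧ γ₁ ∈ Metric.closedBall
        (-(starRingEnd ℂ) (γ₂ - γ₁⁻¹) / ((‖γ₂ - γ₁⁻¹‖ ^ 2 - 1 : ℝ) : ℂ))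
        (1 / (‖γ₂ - γ₁⁻¹‖ ^ 2 - 1))
    ∧ (γ₁ - γ₀⁻¹) ∈ Metric.ball
        (-(starRingEnd ℂ) (γ₂ - γ₁⁻¹) / ((‖γ₂ - γ₁⁻¹‖ ^ 2 - 1 : ℝ) : ℂ))
        (‖γ₂ - γ₁⁻¹‖ ^ 2 / (‖γ₂ - γ₁⁻¹‖ ^ 2 - 1)) := by
  set α := γ₂ - γ₁⁻¹ with hα
  have hγ₁ : γ₁ ≠ 0 := norm_pos_iff.mp (one_pos.trans h1)
  have ht : 0 < ‖α‖ ^ 2 - 1 := by nlinarith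
  have hγ₁_ball : γ₁ ∈ closedBall (-conj α / ((‖α‖ ^ 2 - 1 : ℝ) : ℂ)) (1 / (‖α‖ ^ 2 - 1)) := by
    have hkey : ‖α * γ₁ + 1‖ ≤ ‖γ₁‖ :=
      calc ‖α * γ₁ + 1‖ = ‖γ₂‖ * ‖γ₁‖ := by rw [← norm_mul, hα]; congr 1; field_simp; ring
        _ ≤ ‖γ₁‖ := mul_le_of_le_one_left (norm_nonneg _) h2le
    rw [mem_closedBall, Complex.dist_neg_div_ofReal ht]
    exact div_le_div_of_nonneg_right (Complex.norm_ofReal_mul_add_conj_le_one hα2.le hkey) ht.le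
  refine ⟨?_, hγ₁_ball, ?_⟩
  · calc ‖α‖ ≤ ‖γ₂‖ + ‖γ₁⁻¹‖ := norm_sub_le _ _
      _ < 1 + 1 := add_lt_add_of_le_of_lt h2le (by rw [norm_inv]; exact inv_lt_one_of_one_lt₀ h1)
      _ = 2 := one_add_one_eq_two
  · rw [mem_ball]
    calc dist (γ₁ - γ₀⁻¹) _ ≤ ‖γ₀⁻¹‖ + dist γ₁ _ := by
          rw [← dist_self_sub_left γ₁ γ₀⁻¹]; exact dist_triangle _ _ _
      _ < 1 + 1 / (‖α‖ ^ 2 - 1) :=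
          add_lt_add_of_lt_of_le (by rw [norm_inv]; exact inv_lt_one_of_one_lt₀ h0) hγ₁_ball
      _ = ‖α‖ ^ 2 / (‖α‖ ^ 2 - 1) := by field_simp; ring

/-- Lemma 5.2: if `|γ₀| > 1`, `|γ₁| > 1`, `0 < |γ₂| ≤ 1`, `α₁ = γ₁ - γ₀⁻¹ ∈ Γ`,
`α₂ = γ₂ - γ₁⁻¹ ∈ Γ` and `|α₂| > 1`, then `|α₂| < 2`,
`γ₁ ∈ B̄(-ᾱ₂/(|α₂|²-1), 1/(|α₂|²-1))` and `α₁ ∈ B(-ᾱ₂/(|α₂|²-1), |α₂|²/(|α₂|²-1))`. -/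
theorem stmt_14 (Γ : Subring ℂ) (hdisc : DiscreteTopology Γ)
    (γ₀ γ₁ γ₂ : ℂ)
    (h0 : 1 < ‖γ₀‖) (h1 : 1 < ‖γ₁‖)
    (h2pos : 0 < ‖γ₂‖) (h2le : ‖γ₂‖ ≤ 1)
    (hmem1 : γ₁ - γ₀⁻¹ ∈ Γ) (hmem2 : γ₂ - γ₁⁻¹ ∈ Γ)
    (hα2 : 1 < ‖γ₂ - γ₁⁻¹‖) :
    ‖γ₂ - γ₁⁻¹‖ < 2
    ∧ γ₁ ∈ Metric.closedBall
        (-(starRingEnd ℂ) (γ₂ - γ₁⁻¹) / ((‖γ₂ - γ₁⁻¹‖ ^ 2 - 1 : ℝ) : ℂ))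
        (1 / (‖γ₂ - γ₁⁻¹‖ ^ 2 - 1))
    ∧ (γ₁ - γ₀⁻¹) ∈ Metric.ball
        (-(starRingEnd ℂ) (γ₂ - γ₁⁻¹) / ((‖γ₂ - γ₁⁻¹‖ ^ 2 - 1 : ℝ) : ℂ))
        (‖γ₂ - γ₁⁻¹‖ ^ 2 / (‖γ₂ - γ₁⁻¹‖ ^ 2 - 1)) :=
  stmt_14_general γ₀ γ₁ γ₂ h0 h1 h2le hα2
end

section
/- Let Γ be a discrete subring of ℂ containing 1 and let (a_n)_{n≥0} be a sequence in Γ \ {0} with |a_n| > 1 for all n ≥ 1. Let (p_n), (q_n) be the corresponding Q-pair and set r_n = q_n/q_{n−1} for n ≥ 1. Then at least one of the following holds: (i) |q_{n+1}| > |q_n| for all n ≥ 0; (ii) there exists m ≥ 1 such that |r_n| > 1 for n = 1, …, m, |r_{m+1}| ≤ 1, |a_{m+1}| < 2, r_m lies in the closed disc of center −ā_{m+1}/(|a_{m+1}|² − 1) and radius 1/(|a_{m+1}|² − 1), and a_m lies in the open disc of center −ā_{m+1}/(|a_{m+1}|² − 1) and radius |a_{m+1}|²/(|a_{m+1}|²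 − 1). -/
/-!
Let `m` be the first index at which `|q_n|` fails to grow. For three consecutive terms
`q_{m-1}, q_m, q_{m+1}` with `|q_{m-1}| < |q_m|` and `|q_{m+1}| ≤ |q_m|`, the recurrence
`q_{m+1} = a_{m+1} q_m + q_{m-1}` gives `|a_{m+1}| |q_m| ≤ |q_{m+1}| + |q_{m-1}| < 2 |q_m|`,
and, dividing by `q_{m-1}`, `|a_{m+1} r_m + 1| ≤ |r_m|`. For `|a| > 1` the set
`{r | |a r + 1| ≤ |r|}` is the closed disc of centre `-ā/(|a|²-1)` and radius `1/(|a|²-1)`,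
because `|(|a|²-1) r + ā|² = (|a|²-1)(|a r + 1|² - |r|²) + 1`. Finally the previous step of the
recurrence gives `|a_m - r_m| = |q_{m-2}/q_{m-1}| < 1`, so the triangle inequality puts `a_m` in
the concentric open disc of radius `1 + 1/(|a|²-1)`.
-/

open Metric

noncomputable def discCenter (c : ℂ) : ℂ := -(starRingEnd ℂ) c / ((‖c‖ ^ 2 - 1 : ℝ) : ℂ)

lemma norm_sq_mul_add_conj (c r : ℂ) :
    ‖((‖c‖ ^ 2 - 1 : ℝ) : ℂ) * r + starRingEnd ℂ c‖ ^ 2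
      = (‖c‖ ^ 2 - 1) * (‖c * r + 1‖ ^ 2 - ‖r‖ ^ 2) + 1 := by
  simp only [Complex.sq_norm, Complex.normSq_apply, Complex.add_re, Complex.add_im,
    Complex.mul_re, Complex.mul_im, Complex.ofReal_re, Complex.ofReal_im, Complex.conj_re,
    Complex.conj_im, Complex.one_re, Complex.one_im]
  ring

lemma mem_closedBall_discCenter {c r : ℂ} (hc : 1 < ‖c‖) (h : ‖c * r + 1‖ ≤ ‖r‖) :
    r ∈ closedBall (discCenter c) (1 / (‖c‖ ^ 2 - 1)) := by
  set d : ℝ := ‖c‖ ^ 2 - 1 with hd_def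
  have hd : 0 < d := by nlinarith
  have hnum : ‖(d : ℂ) * r + starRingEnd ℂ c‖ ≤ 1 := by
    rw [← pow_le_one_iff_of_nonneg (norm_nonneg _) two_ne_zero, hd_def, norm_sq_mul_add_conj]
    nlinarith [mul_le_mul_of_nonneg_left (pow_le_pow_left₀ (norm_nonneg _) h 2) hd.le]
  have hsplit : r - discCenter c = ((d : ℂ) * r + starRingEnd ℂ c) / d := by
    have : (d : ℂ) ≠ 0 := by exact_mod_cast hd.ne'
    rw [discCenter, ← hd_def]
    field_simp
    ring
  rw [mem_closedBall, Complex.dist_eq, hsplit, norm_div, Complex.norm_real, Real.norm_of_nonneg hd.le]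
  gcongr

section ThreeTerm

variable {w x y z b c : ℂ}

lemma norm_lt_two_of_three_term (hz : z = c * y + x) (hxy : ‖x‖ < ‖y‖) (hzy : ‖z‖ ≤ ‖y‖) :
    ‖c‖ < 2 := by
  have hy : 0 < ‖y‖ := (norm_nonneg x).trans_lt hxy
  have : ‖c‖ * ‖y‖ < 2 * ‖y‖ :=
    calc ‖c‖ * ‖y‖ = ‖z - x‖ := by rw [hz, add_sub_cancel_right, norm_mul]
      _ ≤ ‖z‖ + ‖x‖ := norm_sub_le z x
      _ < 2 * ‖y‖ := by linarith
  exact lt_of_mul_lt_mul_right this hy.le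

lemma div_mem_closedBall_of_three_term (hz : z = c * y + x) (hx : x ≠ 0) (hc : 1 < ‖c‖)
    (hzy : ‖z‖ ≤ ‖y‖) : y / x ∈ closedBall (discCenter c) (1 / (‖c‖ ^ 2 - 1)) := by
  refine mem_closedBall_discCenter hc ?_
  have : c * (y / x) + 1 = z / x := by rw [hz]; field_simp
  rw [this, norm_div, norm_div]
  gcongr

lemma norm_sub_div_lt_one (hy : y = b * x + w) (hwx : ‖w‖ < ‖x‖) : ‖b - y / x‖ < 1 := by
  have hx : 0 < ‖x‖ := (norm_nonneg w).trans_lt hwx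
  have : b - y / x = -(w / x) := by rw [hy]; field_simp [norm_pos_iff.1 hx]; ring
  rwa [this, norm_neg, norm_div, div_lt_one hx]

lemma mem_ball_of_four_term (hy : y = b * x + w) (hz : z = c * y + x) (hwx : ‖w‖ < ‖x‖)
    (hc : 1 < ‖c‖) (hzy : ‖z‖ ≤ ‖y‖) :
    b ∈ ball (discCenter c) (‖c‖ ^ 2 / (‖c‖ ^ 2 - 1)) := by
  have hx : x ≠ 0 := norm_pos_iff.1 ((norm_nonneg w).trans_lt hwx)
  have hr := div_mem_closedBall_of_three_term hz hx hc hzy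
  rw [mem_closedBall] at hr
  have hd : ‖c‖ ^ 2 - 1 ≠ 0 := by nlinarith
  calc dist b (discCenter c) ≤ dist b (y / x) + dist (y / x) (discCenter c) := dist_triangle _ _ _
    _ < 1 + 1 / (‖c‖ ^ 2 - 1) := by
        rw [Complex.dist_eq]; exact add_lt_add_of_lt_of_le (norm_sub_div_lt_one hy hwx) hr
    _ = ‖c‖ ^ 2 / (‖c‖ ^ 2 - 1) := by field_simp; ring

end ThreeTerm

theorem stmt_15_general
    (a : ℕ → ℂ)
    (ha1 : ∀ n, 1 ≤ n → 1 < Norm.norm (a n))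
    (p q : ℕ → ℂ) (hpq : IsQPair a p q) :
    (∀ n : ℕ, Norm.norm (q (n + 1)) < Norm.norm (q (n + 2)))
    ∨ (∃ m : ℕ, 1 ≤ m ∧
        (∀ n : ℕ, 1 ≤ n → n ≤ m → 1 < Norm.norm (q (n + 1) / q n)) ∧
        Norm.norm (q (m + 2) / q (m + 1)) ≤ 1 ∧
        Norm.norm (a (m + 1)) < 2 ∧
        q (m + 1) / q m ∈ Metric.closedBall
          (-(starRingEnd ℂ) (a (m + 1)) / ((Norm.norm (a (m + 1)) ^ 2 - 1 : ℝ) : ℂ))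
          (1 / (Norm.norm (a (m + 1)) ^ 2 - 1)) ∧
        a m ∈ Metric.ball
          (-(starRingEnd ℂ) (a (m + 1)) / ((Norm.norm (a (m + 1)) ^ 2 - 1 : ℝ) : ℂ))
          (Norm.norm (a (m + 1)) ^ 2 / (Norm.norm (a (m + 1)) ^ 2 - 1))) := by
  obtain ⟨-, -, -, hq0, hq1, hrec⟩ := hpq
  by_cases H : ∀ n : ℕ, ‖q (n + 1)‖ < ‖q (n + 2)‖
  · exact Or.inl H
  right
  classical
  have hex : ∃ n, ‖q (n + 2)‖ ≤ ‖q (n + 1)‖ := by simpa using H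
  set m := Nat.find hex
  have hstop : ‖q (m + 2)‖ ≤ ‖q (m + 1)‖ := Nat.find_spec hex
  have hgrow : ∀ k ≤ m, ‖q k‖ < ‖q (k + 1)‖
    | 0, _ => by simp [hq0, hq1]
    | k + 1, hk => lt_of_not_ge (Nat.find_min hex (by omega))
  have hq_pos : ∀ k ≤ m, 0 < ‖q (k + 1)‖ := fun k hk => (norm_nonneg _).trans_lt (hgrow k hk)
  obtain ⟨k, hk⟩ : ∃ k, m = k + 1 := by
    refine Nat.exists_eq_succ_of_ne_zero fun hm => ?_
    have h2 := hstop
    rw [hm, hrec 0, hq0, hq1] at h2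
    simp only [mul_one, add_zero, norm_one] at h2
    exact h2.not_gt (ha1 1 le_rfl)
  have hc := ha1 (m + 1) (by omega)
  rw [hk] at hstop hgrow hc
  refine ⟨k + 1, by omega, fun n hn1 hnm => ?_, ?_,
    norm_lt_two_of_three_term (hrec (k + 1)) (hgrow _ le_rfl) hstop,
    div_mem_closedBall_of_three_term (hrec (k + 1)) (norm_pos_iff.1 (hq_pos k (by omega))) hc hstop,
    mem_ball_of_four_term (hrec k) (hrec (k + 1)) (hgrow _ (by omega)) hc hstop⟩
  · obtain ⟨j, rfl⟩ : ∃ j, n = j + 1 := Nat.exists_eq_add_of_le' hn1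
    rw [norm_div, one_lt_div (hq_pos j (by omega))]
    exact hgrow _ (by omega)
  · rw [norm_div, div_le_one (hq_pos _ (by omega))]
    exact hstop

/-- Corollary 5.3: for a sequence `(a n)` in `Γ \ {0}` with `|a n| > 1` for `n ≥ 1`,
with Q-pair `(p n), (q n)` and ratios `r_n = q_n/q_{n-1}`, either `|q_{n+1}| > |q_n|`
for all `n ≥ 0`, or there is `m ≥ 1` with `|r_n| > 1` for `n = 1,…,m`, `|r_{m+1}| ≤ 1`,
`|a_{m+1}| < 2`, `r_m ∈ B̄(-ā_{m+1}/(|a_{m+1}|²-1), 1/(|a_{m+1}|²-1))` and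
`a_m ∈ B(-ā_{m+1}/(|a_{m+1}|²-1), |a_{m+1}|²/(|a_{m+1}|²-1))`.
(Indices of `p`, `q` are shifted by one, so `q (n+1)/q n` is the paper's `r_n`.) -/
theorem stmt_15 (Γ : Subring ℂ) (hdisc : DiscreteTopology Γ)
    (a : ℕ → ℂ) (haΓ : ∀ n, a n ∈ Γ) (ha0 : ∀ n, a n ≠ 0)
    (ha1 : ∀ n, 1 ≤ n → 1 < Norm.norm (a n))
    (p q : ℕ → ℂ) (hpq : IsQPair a p q) :
    (∀ n : ℕ, Norm.norm (q (n + 1)) < Norm.norm (q (n + 2)))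
    ∨ (∃ m : ℕ, 1 ≤ m ∧
        (∀ n : ℕ, 1 ≤ n → n ≤ m → 1 < Norm.norm (q (n + 1) / q n)) ∧
        Norm.norm (q (m + 2) / q (m + 1)) ≤ 1 ∧
        Norm.norm (a (m + 1)) < 2 ∧
        q (m + 1) / q m ∈ Metric.closedBall
          (-(starRingEnd ℂ) (a (m + 1)) / ((Norm.norm (a (m + 1)) ^ 2 - 1 : ℝ) : ℂ))
          (1 / (Norm.norm (a (m + 1)) ^ 2 - 1)) ∧
        a m ∈ Metric.ball
          (-(starRingEnd ℂ) (a (m + 1)) / ((Norm.norm (a (m + 1)) ^ 2 - 1 : ℝ) : ℂ))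
          (Norm.norm (a (m + 1)) ^ 2 / (Norm.norm (a (m + 1)) ^ 2 - 1))) :=
  stmt_15_general a ha1 p q hpq
end

section
/- Let 𝔊 = ℤ[i] and let H = {x + iy : |x| + |y| ≤ 1}. Let z ∈ ℂ' = ℂ \ ℚ(i), let (a_n)_{n≥0} be a continued fraction expansion of z over 𝔊 with iteration sequence (z_n)_{n≥0}, and suppose that for all n ≥ 1: (i) z_n ∈ a_n + H, and (ii) if |a_n| < 3 then a_n is even. Then the denominator sequence (q_n) of the corresponding Q-pair satisfies |q_{n+1}| > |q_n| for all n ≥ 0. -/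
/-- The ring 𝔊 = ℤ[i] of Gaussian integers, as a subset of ℂ. -/
def Gs : Set ℂ := {z | ∃ x y : ℤ, z = (x : ℂ) + (y : ℂ) * Complex.I}

/-- The field ℚ(i), the quotient field of ℤ[i], as a subset of ℂ. -/
def QI : Set ℂ := {z | ∃ x y : ℚ, z = (x : ℂ) + (y : ℂ) * Complex.I}

/-- The group Σ of transformations of ℂ generated by `z ↦ -z` and `z ↦ z̄`;
its elements are exactly the four maps below. -/
def Sigma4 : Set (ℂ → ℂ) :=
  {id, fun z => -z, fun z => (starRingEnd ℂ) z, fun z => -(starRingEnd ℂ) z}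

/-- The reflection `σ_y(z) = -z̄` in the y-axis. -/
def sigY : ℂ → ℂ := fun z => -(starRingEnd ℂ) z

/-- `E⁻¹ = {z : z⁻¹ ∈ E}` for a subset `E` of ℂ. -/
def invSet (E : Set ℂ) : Set ℂ := {z | z⁻¹ ∈ E}

/-- The closed square `H = {x + iy : |x| + |y| ≤ 1}` with vertices `±1, ±i`. -/
def Hdiamond : Set ℂ := {z | |z.re| + |z.im| ≤ 1}

/-- A Gaussian integer `x + iy` is even if `x + y` is even. -/
def IsEvenGaussian (z : ℂ) : Prop :=
  ∃ x y : ℤ, z = (x : ℂ) + (y : ℂ) * Complex.I ∧ Even (x + y)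

/-! Put `w n = zs n - a n`, so `‖w n‖ < 1` and `w n = (a (n + 1) + w (n + 1))⁻¹`. By induction on
`n` one proves `‖q n‖ < ‖q (n + 1) + μ * q n‖` for every even Gaussian integer `μ` with `|μ|² ≤ 2`
and `‖w n - μ‖ ≤ 1`; the theorem is the case `μ = 0`. With `β = a (n + 1) + μ` the next step concerns
`β * q (n + 1) + q n`, and the parity hypothesis forces `β = 0`, `|β|² = 2` or `|β| ≥ 2`. The first
would put `zs (n + 1)` in the unit disc, the last is the triangle inequality, and for `|β|² = 2` the
identity `|β Q + c|² - |Q|² = |Q + β̄ c|² - |c|²` reduces the step to the claim at level `n` with the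
shift `β̄`, which is admissible because inversion maps the disc `|z - β| ≤ 1` onto `|w - β̄| ≤ 1`. -/

open Complex ComplexConjugate

lemma Int.neg_one_le_and_le_one_of_sq_lt_four {s : ℤ} (h : s ^ 2 < 4) : -1 ≤ s ∧ s ≤ 1 := by
  constructor <;> nlinarith

lemma Int.add_eq_zero_or_sq_add_sq_eq_two_or_four_le {x y u v : ℤ}
    (hxy : x ^ 2 + y ^ 2 < 9 → Even (x + y)) (huv : Even (u + v)) (huv2 : u ^ 2 + v ^ 2 ≤ 2) :
    (x + u = 0 ∧ y + v = 0) ∨ (Even (x + u + (y + v)) ∧ (x + u) ^ 2 + (y + v) ^ 2 = 2) ∨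
      4 ≤ (x + u) ^ 2 + (y + v) ^ 2 := by
  by_cases h9 : x ^ 2 + y ^ 2 < 9
  · have hst : Even (x + u + (y + v)) := by
      rw [add_add_add_comm]; exact (hxy h9).add huv
    obtain ⟨r, hr⟩ : Even ((x + u) ^ 2 + (y + v) ^ 2) := by simpa [parity_simps] using hst
    have hs := sq_nonneg (x + u)
    have ht := sq_nonneg (y + v)
    rcases (show r = 0 ∨ r = 1 ∨ 2 ≤ r by omega) with rfl | rfl | hr2
    · left; constructor <;> nlinarith
    · right; left; exact ⟨hst, by omega⟩
    · right; right; omega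
  · right; right
    by_contra! h4
    obtain ⟨hs, hs'⟩ := Int.neg_one_le_and_le_one_of_sq_lt_four (by nlinarith [sq_nonneg (y + v)])
    obtain ⟨ht, ht'⟩ := Int.neg_one_le_and_le_one_of_sq_lt_four (by nlinarith [sq_nonneg (x + u)])
    obtain ⟨hu, hu'⟩ := Int.neg_one_le_and_le_one_of_sq_lt_four (by nlinarith [sq_nonneg v])
    obtain ⟨hv, hv'⟩ := Int.neg_one_le_and_le_one_of_sq_lt_four (by nlinarith [sq_nonneg u])
    have hx : x ^ 2 ≤ 4 := by nlinarith
    have hy : y ^ 2 ≤ 4 := by nlinarith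
    omega

lemma normSq_intCast_add_intCast_mul_I (x y : ℤ) :
    normSq ((x : ℂ) + (y : ℂ) * I) = ((x ^ 2 + y ^ 2 : ℤ) : ℝ) := by
  simpa using normSq_add_mul_I x y

lemma isEvenGaussian_intCast_add_intCast_mul_I_iff {x y : ℤ} :
    IsEvenGaussian ((x : ℂ) + (y : ℂ) * I) ↔ Even (x + y) := by
  refine ⟨fun ⟨x', y', h, hxy⟩ => ?_, fun h => ⟨x, y, rfl, h⟩⟩
  have hre := congrArg re h
  have him := congrArg im h
  simp only [add_re, add_im, mul_re, mul_im, I_re, I_im, intCast_re, intCast_im] at hre him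
  norm_num at hre him
  rw [show x = x' by exact_mod_cast hre, show y = y' by exact_mod_cast him]
  exact hxy

lemma isEvenGaussian_zero : IsEvenGaussian 0 := ⟨0, 0, by simp, ⟨0, rfl⟩⟩

lemma IsEvenGaussian.conj {z : ℂ} (h : IsEvenGaussian z) : IsEvenGaussian (conj z) := by
  obtain ⟨x, y, rfl, hxy⟩ := h
  refine ⟨x, -y, by simp [map_add, map_mul, conj_I], ?_⟩
  simpa [parity_simps] using hxy

lemma add_eq_zero_or_normSq_add_eq_two_or_four_le {α μ : ℂ} (hα : α ∈ Gs)
    (hαe : ‖α‖ < 3 → IsEvenGaussian α) (hμ : IsEvenGaussian μ) (hμ2 : normSq μ ≤ 2) :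
    α + μ = 0 ∨ (IsEvenGaussian (α + μ) ∧ normSq (α + μ) = 2) ∨ 4 ≤ normSq (α + μ) := by
  obtain ⟨x, y, rfl⟩ := hα
  obtain ⟨u, v, rfl, huv⟩ := hμ
  have hxy : x ^ 2 + y ^ 2 < 9 → Even (x + y) := fun h9 => by
    refine isEvenGaussian_intCast_add_intCast_mul_I_iff.1 (hαe ?_)
    rw [← sq_lt_sq₀ (norm_nonneg _) (by norm_num), Complex.sq_norm,
      normSq_intCast_add_intCast_mul_I]
    exact_mod_cast h9
  rw [normSq_intCast_add_intCast_mul_I] at hμ2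
  rw [show (x : ℂ) + y * I + (u + v * I) = ((x + u : ℤ) : ℂ) + ((y + v : ℤ) : ℂ) * I by
    push_cast; ring, normSq_intCast_add_intCast_mul_I,
    isEvenGaussian_intCast_add_intCast_mul_I_iff]
  rcases Int.add_eq_zero_or_sq_add_sq_eq_two_or_four_le hxy huv (by exact_mod_cast hμ2) with
    ⟨hs, ht⟩ | ⟨heven, h2⟩ | h4
  · left; rw [hs, ht]; simp
  · right; left; exact ⟨heven, by exact_mod_cast h2⟩
  · right; right; exact_mod_cast h4

/-- The circle `|z - β| = 1` with `|β|² = 2` is orthogonal to the unit circle, so `z ↦ z⁻¹` maps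
the disc it bounds onto its mirror image `|w - β̄| ≤ 1`. -/
lemma norm_inv_sub_conj_le_one {β W : ℂ} (hβ : normSq β = 2) (hW : ‖W‖ ≤ 1) :
    ‖(β + W)⁻¹ - conj β‖ ≤ 1 := by
  rw [← sq_le_one_iff₀ (norm_nonneg _), Complex.sq_norm] at hW ⊢
  have hz : β + W ≠ 0 := fun h => by
    rw [← neg_eq_of_add_eq_zero_right h, normSq_neg] at hW
    linarith
  have key : normSq (1 - conj β * (β + W)) = normSq (β + W) + (normSq W - 1) := by
    rw [normSq_apply] at hβ
    simp only [normSq_apply, sub_re, sub_im, add_re, add_im, mul_re, mul_im, conj_re, conj_im,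
      one_re, one_im]
    linear_combination (β.re * β.re + β.im * β.im - 1 + W.re * W.re + W.im * W.im
      + 2 * (β.re * W.re + β.im * W.im)) * hβ
  rw [show (β + W)⁻¹ - conj β = (1 - conj β * (β + W)) / (β + W) by field_simp, map_div₀,
    div_le_one (normSq_pos.2 hz), key]
  linarith

lemma norm_lt_norm_mul_add_of_normSq_eq_two {β Q c : ℂ} (hβ : normSq β = 2)
    (h : ‖c‖ < ‖Q + conj β * c‖) : ‖Q‖ < ‖β * Q + c‖ := by
  have key : normSq (β * Q + c) - normSq Q = normSq (Q + conj β * c) - normSq c := by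
    rw [normSq_apply] at hβ
    simp only [normSq_apply, add_re, add_im, mul_re, mul_im, conj_re, conj_im]
    linear_combination (Q.re * Q.re + Q.im * Q.im - c.re * c.re - c.im * c.im) * hβ
  have h2 : ‖c‖ ^ 2 < ‖Q + conj β * c‖ ^ 2 := by gcongr
  rw [← sq_lt_sq₀ (norm_nonneg _) (norm_nonneg _)]
  simp only [Complex.sq_norm] at h2 ⊢
  linarith

lemma norm_lt_norm_mul_add_of_two_le {β Q c : ℂ} (hβ : 2 ≤ ‖β‖) (h : ‖c‖ < ‖Q‖) :
    ‖Q‖ < ‖β * Q + c‖ :=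
  calc ‖Q‖ < 2 * ‖Q‖ - ‖c‖ := by linarith
    _ ≤ ‖β * Q‖ - ‖c‖ := by rw [norm_mul]; gcongr
    _ ≤ ‖β * Q + c‖ := by simpa using norm_sub_norm_le (β * Q) (-c)

theorem norm_lt_norm_succ_add_mul {a zs q : ℕ → ℂ} (haG : ∀ n, a n ∈ Gs)
    (heven : ∀ n, 1 ≤ n → ‖a n‖ < 3 → IsEvenGaussian (a n))
    (habs : ∀ n, 0 < ‖zs n - a n‖ ∧ ‖zs n - a n‖ < 1) (hzs : ∀ n, zs (n + 1) = (zs n - a n)⁻¹)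
    (hq0 : q 0 = 0) (hq1 : q 1 = 1) (hq : ∀ n, q (n + 2) = a (n + 1) * q (n + 1) + q n)
    (n : ℕ) : ∀ μ, IsEvenGaussian μ → normSq μ ≤ 2 → ‖zs n - a n - μ‖ ≤ 1 →
      ‖q n‖ < ‖q (n + 1) + μ * q n‖ := by
  induction n with
  | zero => intro μ _ _ _; simp [hq0, hq1]
  | succ n ih =>
    intro μ hμ hμ2 hwμ
    rw [show q (n + 1 + 1) + μ * q (n + 1) = (a (n + 1) + μ) * q (n + 1) + q n by rw [hq]; ring]
    rcases add_eq_zero_or_normSq_add_eq_two_or_four_le (haG (n + 1)) (heven (n + 1) n.succ_pos)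
      hμ hμ2 with h0 | ⟨hβ, hβ2⟩ | hβ4
    · have hz : 1 < ‖zs (n + 1)‖ := by
        rw [hzs n, norm_inv]
        exact (one_lt_inv₀ (habs n).1).2 (habs n).2
      rw [sub_sub, h0, sub_zero] at hwμ
      linarith
    · have hw : zs n - a n = (a (n + 1) + μ + (zs (n + 1) - a (n + 1) - μ))⁻¹ := by
        rw [sub_sub, add_sub_cancel, hzs n, inv_inv]
      exact norm_lt_norm_mul_add_of_normSq_eq_two hβ2
        (ih _ hβ.conj (by rw [normSq_conj, hβ2]) (hw ▸ norm_inv_sub_conj_le_one hβ2 hwμ))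
    · have hβ : 2 ≤ ‖a (n + 1) + μ‖ := by
        nlinarith [Complex.sq_norm (a (n + 1) + μ), norm_nonneg (a (n + 1) + μ)]
      refine norm_lt_norm_mul_add_of_two_le hβ ?_
      simpa using ih 0 isEvenGaussian_zero (by simp) (by simpa using (habs n).2.le)

theorem stmt_18_general (a zs p q : ℕ → ℂ)
    (haG : ∀ n, a n ∈ Gs)
    (habs : ∀ n, 0 < ‖zs n - a n‖ ∧ ‖zs n - a n‖ < 1)
    (hzs : ∀ n, zs (n + 1) = (zs n - a n)⁻¹)
    (hpq : IsQPair a p q)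
    (heven : ∀ n : ℕ, 1 ≤ n → ‖a n‖ < 3 → IsEvenGaussian (a n)) :
    ∀ n : ℕ, ‖q (n + 1)‖ < ‖q (n + 2)‖ := by
  obtain ⟨-, -, -, hq0, hq1, hq⟩ := hpq
  intro n
  simpa using norm_lt_norm_succ_add_mul haG heven habs hzs hq0 hq1 hq (n + 1) 0
    isEvenGaussian_zero (by simp) (by simpa using (habs (n + 1)).2.le)

/-- Theorem 6.4: for a continued fraction expansion of `z ∈ ℂ'` over ℤ[i] such that,
for all `n ≥ 1`, `z_n ∈ a_n + H` and `a_n` is even whenever `|a_n| < 3`, the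
denominators satisfy `|q_{n+1}| > |q_n|` for all `n ≥ 0`. -/
theorem stmt_18 (z : ℂ) (hz : z ∉ QI)
    (a zs p q : ℕ → ℂ)
    (haG : ∀ n, a n ∈ Gs)
    (hzs0 : zs 0 = z)
    (habs : ∀ n, 0 < ‖zs n - a n‖ ∧ ‖zs n - a n‖ < 1)
    (hzs : ∀ n, zs (n + 1) = (zs n - a n)⁻¹)
    (hpq : IsQPair a p q)
    (hH : ∀ n : ℕ, 1 ≤ n → zs n - a n ∈ Hdiamond)
    (heven : ∀ n : ℕ, 1 ≤ n → ‖a n‖ < 3 → IsEvenGaussian (a n)) :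
    ∀ n : ℕ, ‖q (n + 1)‖ < ‖q (n + 2)‖ :=
  stmt_18_general a zs p q haG habs hzs hpq heven
end
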